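/- arXiv:1305.6329 — 7 statements merged into one kernel-verified Lean document; each statement's English description precedes it below -/
import Mathlib

section
/- Let d ≤ n be positive integers and let Σ ⊆ [d] × [n] be a bipartite graph. Then Σ contains a matching (a set of d edges {(1,j₁),...,(d,j_d)} with all j_k distinct) onto every d-element subset J of [n] if and only if for every nonempty subset I ⊆ [d], the neighborhood J_I(Σ) = {j : (i,j) ∈ Σ for some i ∈ I} has cardinality at least n - d + |I|. -/
open Finset

/-- `σ` is a matching of the bipartite graph `S ⊆ [d] × [n]` onto the `d`-subset `J`. -/
def IsMatchingOn {d n : ℕ} (S : Finset (Fin d × Fin n)) (σ : Fin d → Fin n)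
    (J : Finset (Fin n)) : Prop :=
  Function.Injective σ ∧ (∀ i, (i, σ i) ∈ S) ∧ Finset.image σ Finset.univ = J

/-- The neighborhood `J_I(S)` of a set `I` of left vertices. -/
def nbr {d n : ℕ} (S : Finset (Fin d × Fin n)) (I : Finset (Fin d)) : Finset (Fin n) :=
  (S.filter (fun e => e.1 ∈ I)).image Prod.snd

theorem stmt_0 (d n : ℕ) (hd : 0 < d) (hdn : d ≤ n) (S : Finset (Fin d × Fin n)) :
    (∀ J : Finset (Fin n), J.card = d → ∃ σ : Fin d → Fin n, IsMatchingOn S σ J) ↔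
    (∀ I : Finset (Fin d), I.Nonempty → n - d + I.card ≤ (nbr S I).card) := by
  constructor
  · intro h I hI
    by_contra hc
    push_neg at hc
    have hIc : 0 < I.card := Finset.card_pos.2 hI
    have hId : I.card ≤ d := by
      simpa using Finset.card_le_card (Finset.subset_univ I)
    have hcompl : ((nbr S I)ᶜ).card = n - (nbr S I).card := by
      rw [Finset.card_compl]; simp
    obtain ⟨K, hK1, hK2⟩ := Finset.exists_subset_card_eq
      (s := (nbr S I)ᶜ) (n := d - I.card + 1) (by omega)
    obtain ⟨J, hKJ, -, hJcard⟩ := Finset.exists_subsuperset_card_eq (n := d)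
      (Finset.subset_univ K) (by omega) (by simpa using hdn)
    obtain ⟨σ, hinj, hmem, him⟩ := h J hJcard
    have h1 : Finset.image σ I ⊆ (nbr S I) ∩ J := by
      intro j hj
      simp only [Finset.mem_image] at hj
      obtain ⟨i, hiI, rfl⟩ := hj
      refine Finset.mem_inter.2 ⟨?_, ?_⟩
      · simp only [nbr, Finset.mem_image, Finset.mem_filter]
        exact ⟨(i, σ i), ⟨hmem i, hiI⟩, rfl⟩
      · rw [← him]; exact Finset.mem_image_of_mem σ (Finset.mem_univ i)
    have h2 : (nbr S I) ∩ J ⊆ J \ K := by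
      intro j hj
      rw [Finset.mem_inter] at hj
      refine Finset.mem_sdiff.2 ⟨hj.2, fun hjK => ?_⟩
      have := hK1 hjK
      simp only [Finset.mem_compl] at this
      exact this hj.1
    have c1 : I.card ≤ ((nbr S I) ∩ J).card := by
      rw [← Finset.card_image_of_injective I hinj]
      exact Finset.card_le_card h1
    have c2 : (J \ K).card = d - (d - I.card + 1) := by
      rw [Finset.card_sdiff_of_subset hKJ, hJcard, hK2]
    have := Finset.card_le_card h2
    omega
  · intro h J hJ
    have key : ∀ s : Finset (Fin d),
        s.card ≤ (s.biUnion (fun i => J.filter (fun j => (i, j) ∈ S))).card := by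
      intro s
      rcases s.eq_empty_or_nonempty with rfl | hs
      · simp
      · have h1 := h s hs
        have hsub : (nbr S s) ∩ J ⊆ s.biUnion (fun i => J.filter (fun j => (i, j) ∈ S)) := by
          intro j hj
          rw [Finset.mem_inter] at hj
          obtain ⟨hj1, hj2⟩ := hj
          simp only [nbr, Finset.mem_image, Finset.mem_filter] at hj1
          obtain ⟨⟨i, j'⟩, ⟨hiS, his⟩, rfl⟩ := hj1
          exact Finset.mem_biUnion.2 ⟨i, his, Finset.mem_filter.2 ⟨hj2, hiS⟩⟩
        have hun := Finset.card_union_add_card_inter (nbr S s) J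
        have hle : ((nbr S s) ∪ J).card ≤ n := by
          simpa using Finset.card_le_card (Finset.subset_univ ((nbr S s) ∪ J))
        have := Finset.card_le_card hsub
        omega
    obtain ⟨σ, hinj, hmem⟩ :=
      (Finset.all_card_le_biUnion_card_iff_exists_injective
        (fun i => J.filter (fun j => (i, j) ∈ S))).1 key
    refine ⟨σ, hinj, fun i => (Finset.mem_filter.1 (hmem i)).2, ?_⟩
    apply Finset.eq_of_subset_of_card_le
    · intro j hj
      simp only [Finset.mem_image] at hj
      obtain ⟨i, -, rfl⟩ := hj
      exact (Finset.mem_filter.1 (hmem i)).1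
    · rw [Finset.card_image_of_injective _ hinj, hJ]
      simp
end

section
/- Let d < n, and let G be a connected bipartite graph on vertex set [d] ⊔ [n] such that every edge of G is contained in some matching of G (a matching being a set of d edges covering all of [d] with distinct right endpoints). Then G contains a spanning tree having no leaves in [d]. -/
open Finset

/-- The simple graph on `[d] ⊔ [n]` whose edges are given by the bipartite graph `S`. -/
def biGraph {d n : ℕ} (S : Finset (Fin d × Fin n)) : SimpleGraph (Fin d ⊕ Fin n) :=
  SimpleGraph.fromRel (fun u v => ∃ e ∈ S, u = Sum.inl e.1 ∧ v = Sum.inr e.2)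

namespace StmtAux

variable {d n : ℕ}

/-- Neighborhood of a set of left vertices. -/
def Nbr (S : Finset (Fin d × Fin n)) (A : Finset (Fin d)) : Finset (Fin n) :=
  (S.filter (fun e => e.1 ∈ A)).image Prod.snd

/-- The Hall-plus condition. -/
def Hp (S : Finset (Fin d × Fin n)) : Prop :=
  ∀ A : Finset (Fin d), A.Nonempty → A.card + 1 ≤ (Nbr S A).card

lemma mem_Nbr {S : Finset (Fin d × Fin n)} {A : Finset (Fin d)} {j : Fin n} :
    j ∈ Nbr S A ↔ ∃ i ∈ A, (i, j) ∈ S := by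
  simp only [Nbr, mem_image, mem_filter]
  constructor
  · rintro ⟨e, ⟨heS, heA⟩, rfl⟩
    exact ⟨e.1, heA, heS⟩
  · rintro ⟨i, hiA, hS⟩
    exact ⟨(i, j), ⟨hS, hiA⟩, rfl⟩

lemma Nbr_mono_right {S : Finset (Fin d × Fin n)} {A B : Finset (Fin d)} (h : A ⊆ B) :
    Nbr S A ⊆ Nbr S B := by
  intro j hj
  rw [mem_Nbr] at hj ⊢
  obtain ⟨i, hi, hS⟩ := hj
  exact ⟨i, h hi, hS⟩

lemma Nbr_mono_left {S T : Finset (Fin d × Fin n)} {A : Finset (Fin d)} (h : S ⊆ T) :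
    Nbr S A ⊆ Nbr T A := by
  intro j hj
  rw [mem_Nbr] at hj ⊢
  obtain ⟨i, hi, hS⟩ := hj
  exact ⟨i, hi, h hS⟩

lemma Nbr_union {S : Finset (Fin d × Fin n)} {A B : Finset (Fin d)} :
    Nbr S (A ∪ B) = Nbr S A ∪ Nbr S B := by
  ext j
  simp only [mem_Nbr, mem_union]
  constructor
  · rintro ⟨i, hi | hi, hS⟩
    · exact Or.inl ⟨i, hi, hS⟩
    · exact Or.inr ⟨i, hi, hS⟩
  · rintro (⟨i, hi, hS⟩ | ⟨i, hi, hS⟩)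
    · exact ⟨i, Or.inl hi, hS⟩
    · exact ⟨i, Or.inr hi, hS⟩

lemma Nbr_inter_subset {S : Finset (Fin d × Fin n)} {A B : Finset (Fin d)} :
    Nbr S (A ∩ B) ⊆ Nbr S A ∩ Nbr S B := by
  intro j hj
  rw [mem_inter]
  exact ⟨Nbr_mono_right inter_subset_left hj, Nbr_mono_right inter_subset_right hj⟩

lemma deg_eq_card_Nbr_singleton (S : Finset (Fin d × Fin n)) (i : Fin d) :
    (S.filter (fun e => e.1 = i)).card = (Nbr S {i}).card := by
  unfold Nbr
  have h1 : S.filter (fun e => e.1 ∈ ({i} : Finset (Fin d))) = S.filter (fun e => e.1 = i) := by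
    apply filter_congr; intro e _; simp
  rw [h1]
  rw [Finset.card_image_of_injOn]
  intro a ha b hb hab
  simp only [Finset.mem_coe, mem_filter] at ha hb
  exact Prod.ext (ha.2.trans hb.2.symm) hab

/-- structure of a blocked deletion -/
lemma blocked_struct {S : Finset (Fin d × Fin n)} (hS : Hp S) {i₀ : Fin d} {x : Fin n}
    (hmem : (i₀, x) ∈ S) (hbl : ¬ Hp (S.erase (i₀, x))) :
    ∃ A : Finset (Fin d), i₀ ∈ A ∧ (Nbr S A).card = A.card + 1 ∧
      x ∉ Nbr S (A.erase i₀) := by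
  rw [Hp] at hbl
  push_neg at hbl
  obtain ⟨A, hAne, hAcard⟩ := hbl
  -- i₀ ∈ A
  have hins : Nbr S A ⊆ insert x (Nbr (S.erase (i₀, x)) A) := by
    intro j hj
    rw [mem_Nbr] at hj
    obtain ⟨i, hiA, hiS⟩ := hj
    by_cases h : (i, j) = (i₀, x)
    · rw [mem_insert]; left; exact congrArg Prod.snd h
    · rw [mem_insert]; right; rw [mem_Nbr]
      exact ⟨i, hiA, Finset.mem_erase.mpr ⟨h, hiS⟩⟩
  have hi₀A : i₀ ∈ A := by
    by_contra hi₀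
    have : Nbr S A ⊆ Nbr (S.erase (i₀, x)) A := by
      intro j hj
      rw [mem_Nbr] at hj ⊢
      obtain ⟨i, hiA, hiS⟩ := hj
      refine ⟨i, hiA, Finset.mem_erase.mpr ⟨?_, hiS⟩⟩
      intro h
      injection h with h1 h2
      subst h1
      exact hi₀ hiA
    have := card_le_card this
    have := hS A hAne
    omega
  have hcard : (Nbr S A).card = A.card + 1 := by
    have h1 := card_le_card hins
    have h2 := card_insert_le x (Nbr (S.erase (i₀, x)) A)
    have h3 := hS A hAne
    omega
  have hxnot : x ∉ Nbr (S.erase (i₀, x)) A := by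
    intro hx
    have : Nbr S A ⊆ Nbr (S.erase (i₀, x)) A := by
      intro j hj
      have := hins hj
      rw [mem_insert] at this
      rcases this with rfl | h
      · exact hx
      · exact h
    have := card_le_card this
    have := hS A hAne
    omega
  refine ⟨A, hi₀A, hcard, fun hx => hxnot ?_⟩
  rw [mem_Nbr] at hx
  obtain ⟨i, hiA, hiS⟩ := hx
  rw [mem_Nbr]
  rw [Finset.mem_erase] at hiA
  exact ⟨i, hiA.2, Finset.mem_erase.mpr ⟨fun h => hiA.1 (congrArg Prod.fst h), hiS⟩⟩

theorem phase1 (S : Finset (Fin d × Fin n)) (hS : Hp S) :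
    ∃ F ⊆ S, Hp F ∧ ∀ i, (F.filter (fun e => e.1 = i)).card = 2 := by
  induction S using Finset.strongInduction with
  | _ S ih =>
  by_cases hdeg : ∀ i, (S.filter (fun e => e.1 = i)).card ≤ 2
  · refine ⟨S, Finset.Subset.refl S, hS, fun i => ?_⟩
    have h2 := hS {i} (singleton_nonempty i)
    rw [card_singleton] at h2
    have := deg_eq_card_Nbr_singleton S i
    have := hdeg i
    omega
  · push_neg at hdeg
    obtain ⟨i₀, hi₀⟩ := hdeg
    -- two distinct elements x ≠ y in N(i₀), in fact three, but we need the filter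
    have hdeq := deg_eq_card_Nbr_singleton S i₀
    have hclaim : ∃ x, (i₀, x) ∈ S ∧ Hp (S.erase (i₀, x)) := by
      by_contra hno
      push_neg at hno
      -- at most one blocked, but all are blocked and there are ≥ 3
      have h3 : 3 ≤ (Nbr S {i₀}).card := by omega
      obtain ⟨x, hx, y, hy, hxy⟩ := Finset.one_lt_card.mp (by omega :
        1 < (Nbr S {i₀}).card)
      have hxS : (i₀, x) ∈ S := by
        rw [mem_Nbr] at hx; obtain ⟨i, hi, h⟩ := hx
        rwa [Finset.mem_singleton.mp hi] at h
      have hyS : (i₀, y) ∈ S := by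
        rw [mem_Nbr] at hy; obtain ⟨i, hi, h⟩ := hy
        rwa [Finset.mem_singleton.mp hi] at h
      obtain ⟨A, hiA, hA, hxA⟩ := blocked_struct hS hxS (hno x hxS)
      obtain ⟨B, hiB, hB, hyB⟩ := blocked_struct hS hyS (hno y hyS)
      have hiC : i₀ ∈ A ∩ B := mem_inter.mpr ⟨hiA, hiB⟩
      -- tightness of C
      have hCcard : (Nbr S (A ∩ B)).card ≤ (A ∩ B).card + 1 := by
        have hu : (Nbr S (A ∪ B)).card + (Nbr S (A ∩ B)).card ≤ (Nbr S A).card + (Nbr S B).card := by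
          rw [Nbr_union]
          have h1 := card_le_card (Nbr_inter_subset (S := S) (A := A) (B := B))
          have h2 := Finset.card_union_add_card_inter (Nbr S A) (Nbr S B)
          omega
        have h3 := hS (A ∪ B) ⟨i₀, mem_union_left _ hiA⟩
        have h4 := Finset.card_union_add_card_inter A B
        omega
      -- lower bound
      have hxC : x ∈ Nbr S (A ∩ B) := mem_Nbr.mpr ⟨i₀, hiC, hxS⟩
      have hyC : y ∈ Nbr S (A ∩ B) := mem_Nbr.mpr ⟨i₀, hiC, hyS⟩
      have hxC' : x ∉ Nbr S ((A ∩ B).erase i₀) :=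
        fun h => hxA (Nbr_mono_right (Finset.erase_subset_erase _ inter_subset_left) h)
      have hyC' : y ∉ Nbr S ((A ∩ B).erase i₀) :=
        fun h => hyB (Nbr_mono_right (Finset.erase_subset_erase _ inter_subset_right) h)
      rcases Finset.eq_empty_or_nonempty ((A ∩ B).erase i₀) with hCe | hCe
      · have hCsing : A ∩ B = {i₀} := by
          apply Finset.eq_singleton_iff_unique_mem.mpr
          refine ⟨hiC, fun z hz => ?_⟩
          by_contra hne
          exact absurd (Finset.mem_erase.mpr ⟨hne, hz⟩) (by rw [hCe]; exact notMem_empty z)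
        rw [hCsing] at hCcard
        rw [card_singleton] at hCcard
        omega
      · have hsub : insert x (insert y (Nbr S ((A ∩ B).erase i₀))) ⊆ Nbr S (A ∩ B) := by
          intro j hj
          rcases mem_insert.mp hj with rfl | hj
          · exact hxC
          rcases mem_insert.mp hj with rfl | hj
          · exact hyC
          · exact Nbr_mono_right (Finset.erase_subset _ _) hj
        have hcard2 : ((A ∩ B).erase i₀).card + 1 ≤ (Nbr S ((A ∩ B).erase i₀)).card := hS _ hCe
        have hce : ((A ∩ B).erase i₀).card = (A ∩ B).card - 1 := Finset.card_erase_of_mem hiC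
        have hcc : 1 ≤ (A ∩ B).card := Finset.card_pos.mpr ⟨i₀, hiC⟩
        have h5 := card_le_card hsub
        rw [Finset.card_insert_of_notMem (by
          intro h
          rcases mem_insert.mp h with h | h
          · exact hxy h
          · exact hxC' h), Finset.card_insert_of_notMem hyC'] at h5
        omega
    obtain ⟨x, hxS, hHp⟩ := hclaim
    obtain ⟨F, hF1, hF2, hF3⟩ := ih (S.erase (i₀, x)) (Finset.erase_ssubset hxS) hHp
    exact ⟨F, hF1.trans (Finset.erase_subset _ _), hF2, hF3⟩

section Generic
variable {V : Type*} {G : SimpleGraph V}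
open SimpleGraph Walk

lemma first_edge_mem {a b : V} {p : G.Walk a b} (hp : ¬ p.Nil) :
    s(a, p.getVert 1) ∈ p.edges := by
  cases p with
  | nil => simp at hp
  | cons h q =>
    simp [Walk.getVert_cons_succ, Walk.getVert_zero, Walk.edges_cons]

lemma exists_two_nbrs_aux {u : V} {c : G.Walk u u} (hc : c.IsCycle) :
    ∃ a b, a ≠ b ∧ G.Adj u a ∧ G.Adj u b ∧ a ∈ c.support ∧ b ∈ c.support := by
  cases c with
  | nil => exact absurd hc Walk.IsCycle.not_of_nil
  | @cons _ w _ h q =>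
    rw [Walk.cons_isCycle_iff] at hc
    obtain ⟨hq, he⟩ := hc
    have hnn : ¬ q.reverse.Nil := Walk.not_nil_of_ne h.ne
    have hadj : G.Adj u (q.reverse.getVert 1) := q.reverse.adj_snd hnn
    have hedge : s(u, q.reverse.getVert 1) ∈ q.reverse.edges := first_edge_mem hnn
    have hb_supp : q.reverse.getVert 1 ∈ q.support := by
      have := Walk.snd_mem_support_of_mem_edges _ hedge
      rwa [Walk.support_reverse, List.mem_reverse] at this
    have hab : w ≠ q.reverse.getVert 1 := by
      intro hwb
      apply he
      have : s(u, q.reverse.getVert 1) ∈ q.edges := by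
        have := hedge
        rwa [Walk.edges_reverse, List.mem_reverse] at this
      rwa [← hwb] at this
    refine ⟨w, q.reverse.getVert 1, hab, h, hadj, ?_, ?_⟩
    · rw [Walk.support_cons]
      exact List.mem_cons_of_mem _ q.start_mem_support
    · rw [Walk.support_cons]
      exact List.mem_cons_of_mem _ hb_supp

lemma exists_two_nbrs [DecidableEq V] {v u : V} {c : G.Walk v v} (hc : c.IsCycle)
    (hu : u ∈ c.support) :
    ∃ a b, a ≠ b ∧ G.Adj u a ∧ G.Adj u b ∧ a ∈ c.support ∧ b ∈ c.support := by
  obtain ⟨a, b, hab, ha, hb, has, hbs⟩ := exists_two_nbrs_aux (hc.rotate hu)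
  have htrans : ∀ x, x ∈ (c.rotate u hu).support → x ∈ c.support := by
    intro x hx
    rw [Walk.mem_support_iff] at hx
    rcases hx with rfl | hx
    · exact hu
    · exact List.mem_of_mem_tail (((Walk.support_rotate c u hu).mem_iff).mp hx)
  exact ⟨a, b, hab, ha, hb, htrans a has, htrans b hbs⟩

lemma isAcyclic_sup_edge {x y : V} (hne : x ≠ y) (hH : G.IsAcyclic)
    (hr : ¬ G.Reachable x y) : (G ⊔ SimpleGraph.fromEdgeSet {s(x, y)}).IsAcyclic := by
  intro v c hc
  by_cases he : s(x, y) ∈ c.edges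
  · have hkey := SimpleGraph.adj_and_reachable_delete_edges_iff_exists_cycle.mpr ⟨v, c, hc, he⟩
    apply hr
    refine hkey.2.mono ?_
    intro a b hab
    have : ((G ⊔ SimpleGraph.fromEdgeSet {s(x, y)}) \ SimpleGraph.fromEdgeSet {s(x, y)}).Adj a b
      := hab
    rw [sup_sdiff_right_self] at this
    exact this.1
  · have hsub : ∀ e ∈ c.edges, e ∈ G.edgeSet := by
      intro e hece
      have h1 := c.edges_subset_edgeSet hece
      rw [SimpleGraph.edgeSet_sup] at h1
      rcases h1 with h1 | h1
      · exact h1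
      · rw [SimpleGraph.edgeSet_fromEdgeSet] at h1
        obtain ⟨h2, -⟩ := h1
        rw [Set.mem_singleton_iff] at h2
        exact absurd (h2 ▸ hece) he
    exact hH (c.transfer G hsub) (hc.transfer hsub)

lemma crossing_edge {S : Set V} {u v : V} (h : G.Reachable u v) (hu : u ∈ S) (hv : v ∉ S) :
    ∃ a b, G.Adj a b ∧ a ∈ S ∧ b ∉ S := by
  obtain ⟨p⟩ := h
  obtain ⟨dd, -, h1, h2⟩ := p.exists_boundary_dart S hu hv
  exact ⟨dd.fst, dd.snd, dd.adj, h1, h2⟩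

end Generic

open SimpleGraph in
lemma biGraph_adj {S : Finset (Fin d × Fin n)} {u v : Fin d ⊕ Fin n} :
    (biGraph S).Adj u v ↔ (∃ p ∈ S, u = Sum.inl p.1 ∧ v = Sum.inr p.2) ∨
      (∃ p ∈ S, v = Sum.inl p.1 ∧ u = Sum.inr p.2) := by
  unfold biGraph
  rw [SimpleGraph.fromRel_adj]
  constructor
  · rintro ⟨-, h⟩; exact h
  · intro h
    refine ⟨?_, h⟩
    rcases h with ⟨p, -, h1, h2⟩ | ⟨p, -, h1, h2⟩
    · rw [h1, h2]; simp
    · rw [h1, h2]; simp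

open SimpleGraph in
lemma biGraph_insert (p : Fin d × Fin n) (F : Finset (Fin d × Fin n)) :
    biGraph (insert p F) = biGraph F ⊔
      SimpleGraph.fromEdgeSet {s(Sum.inl p.1, Sum.inr p.2)} := by
  ext u v
  rw [SimpleGraph.sup_adj, biGraph_adj, biGraph_adj, SimpleGraph.fromEdgeSet_adj]
  constructor
  · rintro (⟨q, hq, h1, h2⟩ | ⟨q, hq, h1, h2⟩) <;> rcases Finset.mem_insert.mp hq with rfl | hq
    · exact Or.inr ⟨by rw [h1, h2]; exact Set.mem_singleton _, by rw [h1, h2]; simp⟩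
    · exact Or.inl (Or.inl ⟨q, hq, h1, h2⟩)
    · refine Or.inr ⟨?_, by rw [h1, h2]; simp⟩
      rw [h1, h2, Sym2.eq_swap]
      exact Set.mem_singleton _
    · exact Or.inl (Or.inr ⟨q, hq, h1, h2⟩)
  · rintro ((⟨q, hq, h1, h2⟩ | ⟨q, hq, h1, h2⟩) | ⟨heq, hne⟩)
    · exact Or.inl ⟨q, Finset.mem_insert_of_mem hq, h1, h2⟩
    · exact Or.inr ⟨q, Finset.mem_insert_of_mem hq, h1, h2⟩
    · rw [Set.mem_singleton_iff, Sym2.eq_iff] at heq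
      rcases heq with ⟨h1, h2⟩ | ⟨h1, h2⟩
      · exact Or.inl ⟨p, Finset.mem_insert_self p F, h1, h2⟩
      · exact Or.inr ⟨p, Finset.mem_insert_self p F, h2, h1⟩

open SimpleGraph in
lemma biGraph_edgeFinset_card (S : Finset (Fin d × Fin n))
    [Fintype (biGraph S).edgeSet] : (biGraph S).edgeFinset.card = S.card := by
  classical
  have himg : (biGraph S).edgeFinset = S.image (fun e => s(Sum.inl e.1, Sum.inr e.2)) := by
    ext e
    refine Sym2.ind (fun u v => ?_) e
    rw [SimpleGraph.mem_edgeFinset, SimpleGraph.mem_edgeSet, biGraph_adj, Finset.mem_image]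
    constructor
    · rintro (⟨p, hp, rfl, rfl⟩ | ⟨p, hp, rfl, rfl⟩)
      · exact ⟨p, hp, rfl⟩
      · exact ⟨p, hp, Sym2.eq_swap⟩
    · rintro ⟨p, hp, he⟩
      rw [Sym2.eq_iff] at he
      rcases he with ⟨h1, h2⟩ | ⟨h1, h2⟩
      · exact Or.inl ⟨p, hp, h1.symm, h2.symm⟩
      · exact Or.inr ⟨p, hp, h1.symm, h2.symm⟩
  rw [himg, Finset.card_image_of_injOn]
  intro a _ b _ hab
  rw [Sym2.eq_iff] at hab
  rcases hab with ⟨h1, h2⟩ | ⟨h1, h2⟩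
  · exact Prod.ext (Sum.inl.inj h1) (Sum.inr.inj h2)
  · exact absurd h1 (by simp)

open SimpleGraph in
lemma acyclic_of_deg2 {F : Finset (Fin d × Fin n)} (hF : Hp F)
    (hdeg : ∀ i, (F.filter (fun e => e.1 = i)).card = 2) : (biGraph F).IsAcyclic := by
  intro v c hc
  haveI : DecidablePred (fun i : Fin d => (Sum.inl i : Fin d ⊕ Fin n) ∈ c.support) :=
    fun _ => Classical.propDecidable _
  haveI : DecidablePred (fun j : Fin n => (Sum.inr j : Fin d ⊕ Fin n) ∈ c.support) :=
    fun _ => Classical.propDecidable _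
  set A : Finset (Fin d) := univ.filter (fun i => (Sum.inl i : Fin d ⊕ Fin n) ∈ c.support) with hA
  set B : Finset (Fin n) := univ.filter (fun j => (Sum.inr j : Fin d ⊕ Fin n) ∈ c.support) with hB
  have hmemA : ∀ i, i ∈ A ↔ Sum.inl i ∈ c.support := by intro i; simp [hA]
  have hmemB : ∀ j, j ∈ B ↔ Sum.inr j ∈ c.support := by intro j; simp [hB]
  -- from a left vertex, cycle-neighbors are right vertices in B
  have hgetL : ∀ (i : Fin d) (w : Fin d ⊕ Fin n), (biGraph F).Adj (Sum.inl i) w →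
      w ∈ c.support → ∃ x, w = Sum.inr x ∧ (i, x) ∈ F ∧ x ∈ B := by
    intro i w hadj hws
    rcases biGraph_adj.mp hadj with ⟨p, hpF, h1, h2⟩ | ⟨p, hpF, h1, h2⟩
    · have hp1 : p.1 = i := (Sum.inl.inj h1).symm
      refine ⟨p.2, h2, ?_, ?_⟩
      · have hmem : (p.1, p.2) ∈ F := by simpa using hpF
        rwa [hp1] at hmem
      · rw [hmemB]; rwa [← h2]
    · exact absurd h2 (by simp)
  have hgetR : ∀ (j : Fin n) (w : Fin d ⊕ Fin n), (biGraph F).Adj (Sum.inr j) w →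
      w ∈ c.support → ∃ i, w = Sum.inl i ∧ (i, j) ∈ F ∧ i ∈ A := by
    intro j w hadj hws
    rcases biGraph_adj.mp hadj with ⟨p, hpF, h1, h2⟩ | ⟨p, hpF, h1, h2⟩
    · exact absurd h1 (by simp)
    · have hp2 : p.2 = j := (Sum.inr.inj h2).symm
      refine ⟨p.1, h1, ?_, ?_⟩
      · have hmem : (p.1, p.2) ∈ F := by simpa using hpF
        rwa [hp2] at hmem
      · rw [hmemA]; rwa [← h1]
  have hAne : A.Nonempty := by
    have hv : v ∈ c.support := c.start_mem_support
    rcases hvv : v with i | j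
    · refine ⟨i, (hmemA i).mpr ?_⟩
      rw [← hvv]; exact hv
    · have hjv : Sum.inr j ∈ c.support := by rw [← hvv]; exact hv
      obtain ⟨a, b, -, ha, -, has, -⟩ := exists_two_nbrs hc hjv
      obtain ⟨i, -, -, hiA⟩ := hgetR j a ha has
      exact ⟨i, hiA⟩
  have hNi : ∀ i ∈ A, ∀ j : Fin n, (i, j) ∈ F → j ∈ B := by
    intro i hiA j hij
    obtain ⟨a, b, hab, ha, hb, has, hbs⟩ := exists_two_nbrs hc ((hmemA i).mp hiA)
    obtain ⟨x, hxe, hx, hxB⟩ := hgetL i a ha has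
    obtain ⟨y, hye, hy, hyB⟩ := hgetL i b hb hbs
    have hxy : x ≠ y := by
      intro hh; apply hab; rw [hxe, hye, hh]
    have hsub : ({(i, x), (i, y)} : Finset (Fin d × Fin n)) ⊆
        F.filter (fun e => e.1 = i) := by
      intro e he
      rcases Finset.mem_insert.mp he with rfl | he
      · exact Finset.mem_filter.mpr ⟨hx, rfl⟩
      · rw [Finset.mem_singleton] at he
        subst he
        exact Finset.mem_filter.mpr ⟨hy, rfl⟩
    have hcard2 : ({(i, x), (i, y)} : Finset (Fin d × Fin n)).card = 2 := by
      rw [Finset.card_insert_of_notMem (by simp [hxy]), Finset.card_singleton]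
    have heq : F.filter (fun e => e.1 = i) = {(i, x), (i, y)} :=
      (Finset.eq_of_subset_of_card_le hsub (by rw [hdeg i, hcard2])).symm
    have hjmem : (i, j) ∈ F.filter (fun e => e.1 = i) := Finset.mem_filter.mpr ⟨hij, rfl⟩
    rw [heq] at hjmem
    rcases Finset.mem_insert.mp hjmem with h | h
    · injection h with h1 h2
      exact h2 ▸ hxB
    · rw [Finset.mem_singleton] at h
      injection h with h1 h2
      exact h2 ▸ hyB
  have hBdeg : ∀ j ∈ B,
      2 ≤ ((F.filter (fun e => e.1 ∈ A)).filter (fun e => e.2 = j)).card := by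
    intro j hjB
    obtain ⟨a, b, hab, ha, hb, has, hbs⟩ := exists_two_nbrs hc ((hmemB j).mp hjB)
    obtain ⟨i1, he1, h1, hA1⟩ := hgetR j a ha has
    obtain ⟨i2, he2, h2, hA2⟩ := hgetR j b hb hbs
    have hii : i1 ≠ i2 := by
      intro hh; apply hab; rw [he1, he2, hh]
    refine Finset.one_lt_card.mpr ⟨(i1, j), ?_, (i2, j), ?_, ?_⟩
    · exact Finset.mem_filter.mpr ⟨Finset.mem_filter.mpr ⟨h1, by simpa using hA1⟩, rfl⟩
    · exact Finset.mem_filter.mpr ⟨Finset.mem_filter.mpr ⟨h2, by simpa using hA2⟩, rfl⟩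
    · simp [hii]
  -- counting
  have hTcard : (F.filter (fun e => e.1 ∈ A)).card = 2 * A.card := by
    have h0 : (F.filter (fun e => e.1 ∈ A)).card =
        ∑ i ∈ A, ((F.filter (fun e => e.1 ∈ A)).filter (fun e => e.1 = i)).card :=
      Finset.card_eq_sum_card_fiberwise (fun e he => (Finset.mem_filter.mp he).2)
    rw [h0]
    have hfib : ∀ i ∈ A, ((F.filter (fun e => e.1 ∈ A)).filter (fun e => e.1 = i)).card = 2 := by
      intro i hi
      have : (F.filter (fun e => e.1 ∈ A)).filter (fun e => e.1 = i) =
          F.filter (fun e => e.1 = i) := by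
        ext e
        simp only [Finset.mem_filter]
        constructor
        · rintro ⟨⟨h1, -⟩, h3⟩; exact ⟨h1, h3⟩
        · rintro ⟨h1, h3⟩; exact ⟨⟨h1, h3 ▸ hi⟩, h3⟩
      rw [this, hdeg i]
    rw [Finset.sum_congr rfl hfib, Finset.sum_const, smul_eq_mul, mul_comm]
  have hcount : 2 * B.card ≤ (F.filter (fun e => e.1 ∈ A)).card := by
    set T := F.filter (fun e => e.1 ∈ A) with hT
    have h1 : (T.filter (fun e => e.2 ∈ B)).card =
        ∑ j ∈ B, ((T.filter (fun e => e.2 ∈ B)).filter (fun e => e.2 = j)).card :=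
      Finset.card_eq_sum_card_fiberwise
        (f := fun e : Fin d × Fin n => e.2) (fun e he => (Finset.mem_filter.mp he).2)
    have h2 : ∀ j ∈ B, 2 ≤ ((T.filter (fun e => e.2 ∈ B)).filter (fun e => e.2 = j)).card := by
      intro j hj
      refine le_trans (hBdeg j hj) (Finset.card_le_card ?_)
      intro e he
      obtain ⟨h3, h4⟩ := Finset.mem_filter.mp he
      exact Finset.mem_filter.mpr ⟨Finset.mem_filter.mpr ⟨h3, h4 ▸ hj⟩, h4⟩
    calc 2 * B.card = ∑ _j ∈ B, 2 := by rw [Finset.sum_const, smul_eq_mul, mul_comm]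
      _ ≤ ∑ j ∈ B, ((T.filter (fun e => e.2 ∈ B)).filter (fun e => e.2 = j)).card :=
          Finset.sum_le_sum h2
      _ = (T.filter (fun e => e.2 ∈ B)).card := h1.symm
      _ ≤ T.card := Finset.card_le_card (Finset.filter_subset _ _)
  have hNbrB : Nbr F A ⊆ B := by
    intro j hj
    rw [mem_Nbr] at hj
    obtain ⟨i, hi, hij⟩ := hj
    exact hNi i hi j hij
  have hhall := hF A hAne
  have hcB := Finset.card_le_card hNbrB
  omega

open SimpleGraph in
lemma hall_plus (hdn : d < n) {G : Finset (Fin d × Fin n)} (hconn : (biGraph G).Connected)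
    (hedge : ∀ e ∈ G, ∃ σ : Fin d → Fin n,
      Function.Injective σ ∧ (∀ i, (i, σ i) ∈ G) ∧ σ e.1 = e.2) : Hp G := by
  classical
  intro A hAne
  obtain ⟨i₀, hi₀⟩ := hAne
  have hnpos : 0 < n := lt_of_le_of_lt (Nat.zero_le d) hdn
  -- there is an edge at i₀
  have hedge₀ : ∃ x : Fin n, (i₀, x) ∈ G := by
    obtain ⟨a, b, hab, haS, hbS⟩ := crossing_edge
      (hconn.preconnected (Sum.inl i₀) (Sum.inr ⟨0, hnpos⟩))
      (S := {Sum.inl i₀}) rfl (by simp)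
    rw [Set.mem_singleton_iff] at haS
    subst haS
    rcases biGraph_adj.mp hab with ⟨p, hpG, h1, h2⟩ | ⟨p, hpG, h1, h2⟩
    · refine ⟨p.2, ?_⟩
      have hp1 : p.1 = i₀ := (Sum.inl.inj h1).symm
      have hmem : (p.1, p.2) ∈ G := by simpa using hpG
      rwa [hp1] at hmem
    · exact absurd h2 (by simp)
  obtain ⟨x₀, hx₀⟩ := hedge₀
  obtain ⟨σ, hinj, hall, -⟩ := hedge (i₀, x₀) hx₀
  have himg : A.image σ ⊆ Nbr G A := by
    intro j hj
    obtain ⟨a, ha, rfl⟩ := Finset.mem_image.mp hj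
    exact mem_Nbr.mpr ⟨a, ha, hall a⟩
  have hge : A.card ≤ (Nbr G A).card := by
    rw [← Finset.card_image_of_injective A hinj]
    exact Finset.card_le_card himg
  by_contra hlt
  push_neg at hlt
  have heq : (Nbr G A).card = A.card := by omega
  set S : Set (Fin d ⊕ Fin n) :=
    {w | Sum.elim (fun i => i ∈ A) (fun j => j ∈ Nbr G A) w} with hS
  have hi₀S : Sum.inl i₀ ∈ S := hi₀
  have hcompl : ∃ w, w ∉ S := by
    by_contra hall'
    push_neg at hall'
    have h1 : (univ : Finset (Fin n)) ⊆ Nbr G A := fun j _ => hall' (Sum.inr j)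
    have h2 := Finset.card_le_card h1
    rw [Finset.card_univ, Fintype.card_fin] at h2
    have h3 : A.card ≤ d := by
      have := Finset.card_le_card (Finset.subset_univ A)
      rwa [Finset.card_univ, Fintype.card_fin] at this
    omega
  obtain ⟨w, hw⟩ := hcompl
  obtain ⟨a, b, hab, haS, hbS⟩ :=
    crossing_edge (hconn.preconnected (Sum.inl i₀) w) hi₀S hw
  rcases biGraph_adj.mp hab with ⟨p, hpG, h1, h2⟩ | ⟨p, hpG, h1, h2⟩
  · -- a = inl p.1 ∈ S, b = inr p.2 ∉ S : contradiction since p.2 ∈ Nbr G A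
    apply hbS
    rw [h2]
    have hp1A : p.1 ∈ A := by rw [h1] at haS; exact haS
    have hmem : (p.1, p.2) ∈ G := by simpa using hpG
    exact (mem_Nbr.mpr ⟨p.1, hp1A, hmem⟩ : p.2 ∈ Nbr G A)
  · -- b = inl p.1 ∉ S so p.1 ∉ A ; a = inr p.2 ∈ S so p.2 ∈ Nbr G A
    have hp1A : p.1 ∉ A := by rw [h1] at hbS; exact hbS
    have hp2N : p.2 ∈ Nbr G A := by rw [h2] at haS; exact haS
    have hmem : (p.1, p.2) ∈ G := by simpa using hpG
    obtain ⟨σ', hinj', hall', hmatch'⟩ := hedge (p.1, p.2) hmem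
    have himg' : A.image σ' ⊆ Nbr G A := by
      intro j hj
      obtain ⟨c, hc, rfl⟩ := Finset.mem_image.mp hj
      exact mem_Nbr.mpr ⟨c, hc, hall' c⟩
    have himg_eq : A.image σ' = Nbr G A :=
      Finset.eq_of_subset_of_card_le himg'
        (by rw [Finset.card_image_of_injective A hinj']; omega)
    have : p.2 ∈ A.image σ' := by rw [himg_eq]; exact hp2N
    obtain ⟨c, hcA, hc⟩ := Finset.mem_image.mp this
    have : c = p.1 := hinj' (by rw [hc, hmatch'])
    exact hp1A (this ▸ hcA)

open SimpleGraph in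
lemma extend (hnev : Nonempty (Fin d ⊕ Fin n)) {G : Finset (Fin d × Fin n)}
    (hconn : (biGraph G).Connected) :
    ∀ (m : ℕ) (F : Finset (Fin d × Fin n)), F ⊆ G → G.card - F.card = m →
      (biGraph F).IsAcyclic →
      ∃ F', F ⊆ F' ∧ F' ⊆ G ∧ (biGraph F').IsTree := by
  intro m
  induction m using Nat.strong_induction_on with
  | _ m ih =>
  intro F hFG hm hacyc
  by_cases hc : (biGraph F).Connected
  · exact ⟨F, Finset.Subset.refl F, hFG, ⟨hc, hacyc⟩⟩
  · have hpre : ¬ (biGraph F).Preconnected := fun h => hc ⟨h⟩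
    rw [SimpleGraph.Preconnected] at hpre
    push_neg at hpre
    obtain ⟨u, v, huv⟩ := hpre
    obtain ⟨a, b, hab, haS, hbS⟩ := crossing_edge (S := {w | (biGraph F).Reachable u w})
      (hconn.preconnected u v) (SimpleGraph.Reachable.refl u) huv
    have hpair : ∃ p ∈ G, p ∉ F ∧ ¬ (biGraph F).Reachable (Sum.inl p.1) (Sum.inr p.2) := by
      rcases biGraph_adj.mp hab with ⟨p, hpG, h1, h2⟩ | ⟨p, hpG, h1, h2⟩
      · refine ⟨p, hpG, ?_, ?_⟩
        · intro hpF
          exact hbS (haS.trans (((biGraph_adj (S := F)).mpr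
            (Or.inl ⟨p, hpF, h1, h2⟩)).reachable))
        · intro hr
          apply hbS
          rw [h2]
          exact (h1 ▸ haS).trans hr
      · refine ⟨p, hpG, ?_, ?_⟩
        · intro hpF
          exact hbS (haS.trans (((biGraph_adj (S := F)).mpr
            (Or.inr ⟨p, hpF, h1, h2⟩)).reachable))
        · intro hr
          apply hbS
          rw [h1]
          exact (h2 ▸ haS).trans hr.symm
    obtain ⟨p, hpG, hpF, hpreach⟩ := hpair
    have hacyc' : (biGraph (insert p F)).IsAcyclic := by
      rw [biGraph_insert]
      exact isAcyclic_sup_edge (by simp) hacyc hpreach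
    have hlt : F.card < G.card :=
      Finset.card_lt_card (Finset.ssubset_iff_of_subset hFG |>.mpr ⟨p, hpG, hpF⟩)
    have hcins : (insert p F).card = F.card + 1 := Finset.card_insert_of_notMem hpF
    obtain ⟨F', h1, h2, h3⟩ := ih (G.card - (insert p F).card)
      (by omega) (insert p F) (Finset.insert_subset hpG hFG) rfl hacyc'
    exact ⟨F', (Finset.subset_insert p F).trans h1, h2, h3⟩


end StmtAux

theorem stmt_3 (d n : ℕ) (hdn : d < n) (G : Finset (Fin d × Fin n))
    (hconn : (biGraph G).Connected)
    (hedge : ∀ e ∈ G, ∃ σ : Fin d → Fin n,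
      Function.Injective σ ∧ (∀ i, (i, σ i) ∈ G) ∧ σ e.1 = e.2) :
    ∃ F ⊆ G, (biGraph F).Connected ∧ F.card = d + n - 1 ∧
      ∀ i : Fin d, 2 ≤ (F.filter (fun e => e.1 = i)).card := by
  classical
  have hHp : StmtAux.Hp G := StmtAux.hall_plus hdn hconn hedge
  obtain ⟨F₀, hF₀G, hF₀Hp, hF₀deg⟩ := StmtAux.phase1 G hHp
  have hacyc : (biGraph F₀).IsAcyclic := StmtAux.acyclic_of_deg2 hF₀Hp hF₀deg
  have hne : Nonempty (Fin d ⊕ Fin n) :=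
    ⟨Sum.inr ⟨0, lt_of_le_of_lt (Nat.zero_le d) hdn⟩⟩
  obtain ⟨F, h1, h2, htree⟩ := StmtAux.extend hne hconn (G.card - F₀.card) F₀ hF₀G rfl hacyc
  refine ⟨F, h2, htree.isConnected, ?_, ?_⟩
  · haveI : Fintype (biGraph F).edgeSet := (Set.toFinite _).fintype
    have hcnt := htree.card_edgeFinset
    rw [StmtAux.biGraph_edgeFinset_card] at hcnt
    rw [Fintype.card_sum, Fintype.card_fin, Fintype.card_fin] at hcnt
    omega
  · intro i
    have hd0 := hF₀deg i
    have hsub := Finset.filter_subset_filter (fun e => e.1 = i) h1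
    have := Finset.card_le_card hsub
    omega
end

section
/- Let d < n, and let G be a connected bipartite graph on vertex set [d] ⊔ [n] such that every edge of G is contained in some matching of G. Then the transversal matroid M(G) on ground set [n], whose bases are the d-subsets B ⊆ [n] admitting a matching of G onto B, is a connected matroid. -/
open Finset

/-- `B` is a basis of the transversal matroid of `G`: `G` contains a matching onto `B`. -/
def IsTransversalBasis {d n : ℕ} (G : Finset (Fin d × Fin n)) (B : Finset (Fin n)) : Prop :=
  ∃ σ : Fin d → Fin n, Function.Injective σ ∧ (∀ i, (i, σ i) ∈ G) ∧
    Finset.image σ Finset.univ = B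

section AuxLemmas

lemma myUpdate_injective {α β : Type*} [DecidableEq α] {σ : α → β} (hσ : Function.Injective σ)
    (i : α) {a : β} (ha : ∀ x, σ x ≠ a) : Function.Injective (Function.update σ i a) := by
  intro x y h
  by_cases hx : x = i <;> by_cases hy : y = i
  · rw [hx, hy]
  · rw [hx, Function.update_self, Function.update_of_ne hy] at h; exact absurd h.symm (ha y)
  · rw [hy, Function.update_of_ne hx, Function.update_self] at h; exact absurd h (ha x)
  · rw [Function.update_of_ne hx, Function.update_of_ne hy] at h; exact hσ h

lemma myImage_update {α β : Type*} [Fintype α] [DecidableEq α] [DecidableEq β]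
    {σ : α → β} (hσ : Function.Injective σ) (i : α) (a : β) :
    Finset.image (Function.update σ i a) Finset.univ =
      insert a ((Finset.image σ Finset.univ).erase (σ i)) := by
  ext z
  simp only [Finset.mem_image, Finset.mem_insert, Finset.mem_erase, Finset.mem_univ, true_and]
  constructor
  · rintro ⟨x, rfl⟩
    by_cases hx : x = i
    · subst hx; simp
    · rw [Function.update_of_ne hx]
      exact Or.inr ⟨fun h => hx (hσ h), x, rfl⟩
  · rintro (rfl | ⟨hz, x, rfl⟩)
    · exact ⟨i, by simp⟩
    · have hx : x ≠ i := fun h => hz (by rw [h])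
      exact ⟨x, by rw [Function.update_of_ne hx]⟩

lemma walk_cross {V : Type*} {Gr : SimpleGraph V} (S : Set V) {u v : V} (p : Gr.Walk u v)
    (hu : u ∈ S) (hv : v ∉ S) : ∃ a b, Gr.Adj a b ∧ a ∈ S ∧ b ∉ S := by
  induction p with
  | nil => exact absurd hu hv
  | @cons x y z h p ih =>
    by_cases hy : y ∈ S
    · exact ih hy hv
    · exact ⟨x, y, h, hu, hy⟩

lemma walk_const {V : Type*} {Gr : SimpleGraph V} (F : V → Prop)
    (hF : ∀ a b, Gr.Adj a b → (F a ↔ F b)) {u v : V} (p : Gr.Walk u v) : F u ↔ F v := by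
  induction p with
  | nil => rfl
  | @cons x y z h p ih => exact (hF x y h).trans ih

lemma card_inter_swap {n : ℕ} {B J : Finset (Fin n)} {y f : Fin n} (hy : y ∈ B) (hf : f ∉ B)
    (h : ((insert f (B.erase y)) ∩ J).card = (B ∩ J).card) : (y ∈ J ↔ f ∈ J) := by
  have hfy : f ≠ y := fun h' => hf (h' ▸ hy)
  by_cases hyJ : y ∈ J <;> by_cases hfJ : f ∈ J
  · exact iff_of_true hyJ hfJ
  · exfalso
    have h2 : (insert f (B.erase y)) ∩ J = (B ∩ J).erase y := by
      ext z; simp only [mem_inter, mem_insert, mem_erase]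
      constructor
      · rintro ⟨rfl | ⟨hz1, hz2⟩, hzJ⟩
        · exact absurd hzJ hfJ
        · exact ⟨hz1, hz2, hzJ⟩
      · rintro ⟨hz1, hz2, hzJ⟩; exact ⟨Or.inr ⟨hz1, hz2⟩, hzJ⟩
    rw [h2, Finset.card_erase_of_mem (mem_inter.2 ⟨hy, hyJ⟩)] at h
    have hpos : 0 < (B ∩ J).card := Finset.card_pos.2 ⟨y, mem_inter.2 ⟨hy, hyJ⟩⟩
    omega
  · exfalso
    have h2 : (insert f (B.erase y)) ∩ J = insert f (B ∩ J) := by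
      ext z; simp only [mem_inter, mem_insert, mem_erase]
      constructor
      · rintro ⟨rfl | ⟨hz1, hz2⟩, hzJ⟩
        · exact Or.inl rfl
        · exact Or.inr ⟨hz2, hzJ⟩
      · rintro (rfl | ⟨hz1, hzJ⟩)
        · exact ⟨Or.inl rfl, hfJ⟩
        · exact ⟨Or.inr ⟨fun h' => hyJ (h' ▸ hzJ), hz1⟩, hzJ⟩
    rw [h2, Finset.card_insert_of_notMem (fun h' => hf (mem_inter.1 h').1)] at h
    omega
  · exact iff_of_false hyJ hfJ

/-- Auxiliary: `y` can be swapped out of the base `image ρ univ` for the free vertex `f`,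
along an alternating path; `ρ` is disturbed only at left vertices whose `ρ`-partners are
themselves swappable (or are `y` itself). -/
inductive TSwp {d n : ℕ} (G : Finset (Fin d × Fin n)) (ρ : Fin d → Fin n) (f : Fin n) :
    Fin n → Prop where
  | mk (y : Fin n) (σ : Fin d → Fin n)
      (hinj : Function.Injective σ) (hedg : ∀ i, (i, σ i) ∈ G)
      (hy : y ∈ Finset.image ρ Finset.univ)
      (him : Finset.image σ Finset.univ =
        insert f ((Finset.image ρ Finset.univ).erase y))
      (hrec : ∀ x, σ x ≠ ρ x → ρ x ≠ y → TSwp G ρ f (ρ x)) :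
      TSwp G ρ f y

lemma TSwp.base {d n : ℕ} {G : Finset (Fin d × Fin n)} {ρ : Fin d → Fin n}
    (hρinj : Function.Injective ρ) (hρedg : ∀ i, (i, ρ i) ∈ G) {f : Fin n} {i : Fin d}
    (hf : f ∉ Finset.image ρ Finset.univ) (hif : (i, f) ∈ G) : TSwp G ρ f (ρ i) := by
  classical
  have hfρ : ∀ x, ρ x ≠ f := fun x h => hf (h ▸ Finset.mem_image_of_mem ρ (Finset.mem_univ x))
  refine TSwp.mk (ρ i) (Function.update ρ i f) (myUpdate_injective hρinj i hfρ) ?_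
    (Finset.mem_image_of_mem ρ (Finset.mem_univ i)) (myImage_update hρinj i f) ?_
  · intro x
    by_cases hx : x = i
    · subst hx; simpa using hif
    · rw [Function.update_of_ne hx]; exact hρedg x
  · intro x h1 h2
    by_cases hx : x = i
    · subst hx; exact absurd rfl h2
    · rw [Function.update_of_ne hx] at h1; exact absurd rfl h1

lemma TSwp.step {d n : ℕ} {G : Finset (Fin d × Fin n)} {ρ : Fin d → Fin n} {f y : Fin n}
    {i : Fin d} (hf : f ∉ Finset.image ρ Finset.univ) (hS : TSwp G ρ f y) (hiy : (i, y) ∈ G) :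
    TSwp G ρ f (ρ i) := by
  classical
  obtain ⟨y, σ, hinj, hedg, hy, him, hrec⟩ := hS
  by_cases hiy' : ρ i = y
  · rw [hiy']; exact TSwp.mk y σ hinj hedg hy him hrec
  set B := Finset.image ρ Finset.univ with hB
  have hfy : f ≠ y := fun h => hf (h ▸ hy)
  have hynot : ∀ x, σ x ≠ y := by
    intro x hx
    have : y ∈ Finset.image σ Finset.univ := hx ▸ Finset.mem_image_of_mem σ (Finset.mem_univ x)
    rw [him] at this
    rcases Finset.mem_insert.1 this with h | h
    · exact hfy h.symm
    · exact (Finset.mem_erase.1 h).1 rfl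
  by_cases hσi : σ i = ρ i
  · have hiB : ρ i ∈ B := Finset.mem_image_of_mem ρ (Finset.mem_univ i)
    have hfi : ρ i ≠ f := fun h => hf (h ▸ hiB)
    refine TSwp.mk (ρ i) (Function.update σ i y) (myUpdate_injective hinj i hynot) ?_ hiB ?_ ?_
    · intro x
      by_cases hx : x = i
      · subst hx; simpa using hiy
      · rw [Function.update_of_ne hx]; exact hedg x
    · rw [myImage_update hinj i y, him, hσi]
      ext z
      simp only [Finset.mem_insert, Finset.mem_erase]
      constructor
      · rintro (rfl | ⟨hz1, rfl | ⟨hz2, hz3⟩⟩)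
        · exact Or.inr ⟨Ne.symm hiy', hy⟩
        · exact Or.inl rfl
        · exact Or.inr ⟨hz1, hz3⟩
      · rintro (rfl | ⟨hz1, hz2⟩)
        · exact Or.inr ⟨Ne.symm hfi, Or.inl rfl⟩
        · by_cases hzy : z = y
          · exact Or.inl hzy
          · exact Or.inr ⟨hz1, Or.inr ⟨hzy, hz2⟩⟩
    · intro x h1 h2
      by_cases hx : x = i
      · subst hx; exact absurd rfl h2
      · rw [Function.update_of_ne hx] at h1
        by_cases hxy : ρ x = y
        · rw [hxy]; exact TSwp.mk y σ hinj hedg hy him hrec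
        · exact hrec x h1 hxy
  · exact hrec i hσi hiy'

end AuxLemmas

theorem stmt_4 (d n : ℕ) (hdn : d < n) (G : Finset (Fin d × Fin n))
    (hconn : (biGraph G).Connected)
    (hedge : ∀ e ∈ G, ∃ σ : Fin d → Fin n,
      Function.Injective σ ∧ (∀ i, (i, σ i) ∈ G) ∧ σ e.1 = e.2) :
    ∀ J : Finset (Fin n), J.Nonempty → J ≠ Finset.univ →
      ∃ B B' : Finset (Fin n), IsTransversalBasis G B ∧ IsTransversalBasis G B' ∧
        (B ∩ J).card ≠ (B' ∩ J).card := by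
  classical
  intro J hJne hJuniv
  by_contra hcon
  push_neg at hcon
  obtain ⟨a, ha⟩ := hJne
  obtain ⟨b, hb⟩ : ∃ b, b ∉ J := by
    by_contra h; push_neg at h; exact hJuniv (Finset.eq_univ_iff_forall.2 h)
  have hab : a ≠ b := fun h => hb (h ▸ ha)
  -- obtain a matching ρ of G
  obtain ⟨ρ, hρinj, hρedg⟩ : ∃ ρ : Fin d → Fin n, Function.Injective ρ ∧ ∀ i, (i, ρ i) ∈ G := by
    rcases G.eq_empty_or_nonempty with hG | ⟨e, he⟩
    · exfalso
      obtain ⟨p⟩ := hconn.preconnected (Sum.inr a) (Sum.inr b)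
      cases p with
      | nil => exact hab rfl
      | cons h _ =>
        rw [biGraph, SimpleGraph.fromRel_adj] at h
        rcases h.2 with ⟨e, heG, _⟩ | ⟨e, heG, _⟩ <;> simp [hG] at heG
    · obtain ⟨σ, h1, h2, _⟩ := hedge e he
      exact ⟨σ, h1, h2⟩
  set B : Finset (Fin n) := Finset.image ρ Finset.univ with hB
  have hBbasis : IsTransversalBasis G B := ⟨ρ, hρinj, hρedg, rfl⟩
  have hBcard : B.card = d := by
    rw [hB, Finset.card_image_of_injective _ hρinj, Finset.card_univ, Fintype.card_fin]
  -- color extraction from swap bases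
  have colorOf : ∀ (σ : Fin d → Fin n) (y f : Fin n), Function.Injective σ →
      (∀ i, (i, σ i) ∈ G) → y ∈ B → f ∉ B →
      Finset.image σ Finset.univ = insert f (B.erase y) → (y ∈ J ↔ f ∈ J) := by
    intro σ y f h1 h2 hy hf him
    refine card_inter_swap hy hf ?_
    rw [← him]
    exact hcon _ B ⟨σ, h1, h2, rfl⟩ hBbasis
  have colorSwp : ∀ {f y : Fin n}, f ∉ B → TSwp G ρ f y → (y ∈ J ↔ f ∈ J) := by
    intro f y hf hS
    obtain ⟨y, σ, h1, h2, hy, him, -⟩ := hS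
    exact colorOf σ y f h1 h2 hy hf him
  -- the reachable set
  set R : Finset (Fin n) := Finset.univ.filter (fun y => y ∉ B ∨ ∃ f, f ∉ B ∧ TSwp G ρ f y)
    with hR
  have hRmem : ∀ y : Fin n, y ∈ R ↔ (y ∉ B ∨ ∃ f, f ∉ B ∧ TSwp G ρ f y) := by
    intro y; rw [hR, Finset.mem_filter]; simp
  have hclosure : ∀ (y : Fin n) (i : Fin d), y ∈ R → (i, y) ∈ G → ρ i ∈ R := by
    intro y i hy hiy
    rw [hRmem] at hy ⊢
    right
    rcases hy with hfree | ⟨f, hf, hS⟩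
    · exact ⟨y, hfree, TSwp.base hρinj hρedg hfree hiy⟩
    · exact ⟨f, hf, TSwp.step hf hS hiy⟩
  -- R is everything
  have hRall : ∀ y, y ∈ R := by
    by_contra hex
    push_neg at hex
    obtain ⟨y₀, hy₀⟩ := hex
    obtain ⟨f₀, hf₀B⟩ : ∃ f₀, f₀ ∉ B := by
      by_contra h; push_neg at h
      have : (Finset.univ : Finset (Fin n)) ⊆ B := fun z _ => h z
      have := Finset.card_le_card this
      simp [hBcard] at this
      omega
    have hf₀R : f₀ ∈ R := (hRmem f₀).2 (Or.inl hf₀B)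
    set S : Set (Fin d ⊕ Fin n) := fun v => Sum.elim (fun i => ρ i ∉ R) (fun y => y ∉ R) v
      with hSdef
    obtain ⟨p⟩ := hconn.preconnected (Sum.inr y₀) (Sum.inr f₀)
    obtain ⟨u, v, hadj, huS, hvS⟩ := walk_cross S p hy₀ (fun h => h hf₀R)
    rw [biGraph, SimpleGraph.fromRel_adj] at hadj
    rcases hadj.2 with ⟨e, he, hu, hv⟩ | ⟨e, he, hv, hu⟩
    · -- u = inl e.1 ∈ S, v = inr e.2 ∉ S
      subst hu; subst hv
      simp only [hSdef, Sum.elim_inl, Sum.elim_inr, Membership.mem, Set.Mem, not_not] at huS hvS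
      exact huS (hclosure e.2 e.1 hvS he)
    · -- v = inl e.1 ∉ S, u = inr e.2 ∈ S
      subst hu; subst hv
      simp only [hSdef, Sum.elim_inl, Sum.elim_inr, Membership.mem, Set.Mem, not_not] at huS hvS
      -- counting argument
      obtain ⟨τ, hτinj, hτedg, hτe⟩ := hedge e he
      set Ic : Finset (Fin d) := Finset.univ.filter (fun x => ρ x ∉ R) with hIc
      set Bc : Finset (Fin n) := Finset.univ.filter (fun y => y ∉ R) with hBc
      have hmemIc : ∀ x : Fin d, x ∈ Ic ↔ ρ x ∉ R := by intro x; simp [hIc]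
      have hmemBc : ∀ y : Fin n, y ∈ Bc ↔ y ∉ R := by intro y; simp [hBc]
      have hcards : Ic.card = Bc.card := by
        refine Finset.card_bij (fun x _ => ρ x) ?_ ?_ ?_
        · intro x hx; rw [hmemBc]; exact (hmemIc x).1 hx
        · intro x1 _ x2 _ h; exact hρinj h
        · intro y hyc
          have hyR : y ∉ R := (hmemBc y).1 hyc
          have hyB : y ∈ B := by
            by_contra hyB
            exact hyR ((hRmem y).2 (Or.inl hyB))
          obtain ⟨x, -, rfl⟩ := Finset.mem_image.1 hyB
          exact ⟨x, (hmemIc x).2 hyR, rfl⟩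
      have hτIc : ∀ x ∈ insert e.1 Ic, τ x ∈ Bc := by
        intro x hx
        rcases Finset.mem_insert.1 hx with rfl | hx
        · rw [hτe, hmemBc]; exact huS
        · rw [hmemBc]
          intro hτR
          exact (hmemIc x).1 hx (hclosure (τ x) x hτR (hτedg x))
      have hle : (insert e.1 Ic).card ≤ Bc.card :=
        Finset.card_le_card_of_injOn τ hτIc (fun x1 _ x2 _ h => hτinj h)
      have he1 : e.1 ∉ Ic := by rw [hmemIc, not_not]; exact hvS
      rw [Finset.card_insert_of_notMem he1] at hle
      omega
  -- the key local fact: along any edge, colors agree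
  have star : ∀ (i : Fin d) (y : Fin n), (i, y) ∈ G → ((y ∈ J) ↔ (ρ i ∈ J)) := by
    intro i y hiy
    by_cases hyB : y ∈ B
    · rcases (hRmem y).1 (hRall y) with h | ⟨f, hf, hS⟩
      · exact absurd hyB h
      · have c1 : y ∈ J ↔ f ∈ J := colorSwp hf hS
        have c2 : ρ i ∈ J ↔ f ∈ J := colorSwp hf (TSwp.step hf hS hiy)
        exact c1.trans c2.symm
    · -- y is free: direct single swap
      have hyρ : ∀ x, ρ x ≠ y := fun x h => hyB (h ▸ Finset.mem_image_of_mem ρ (Finset.mem_univ x))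
      have hinj' := myUpdate_injective hρinj i hyρ
      have hedg' : ∀ x, (x, Function.update ρ i y x) ∈ G := by
        intro x
        by_cases hx : x = i
        · subst hx; simpa using hiy
        · rw [Function.update_of_ne hx]; exact hρedg x
      have him' : Finset.image (Function.update ρ i y) Finset.univ = insert y (B.erase (ρ i)) :=
        myImage_update hρinj i y
      exact (colorOf (Function.update ρ i y) (ρ i) y hinj' hedg'
        (Finset.mem_image_of_mem ρ (Finset.mem_univ i)) hyB him').symm
  -- propagate along the connected graph
  set F : Fin d ⊕ Fin n → Prop := Sum.elim (fun i => ρ i ∈ J) (fun y => y ∈ J) with hF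
  have hFadj : ∀ u v, (biGraph G).Adj u v → (F u ↔ F v) := by
    intro u v h
    rw [biGraph, SimpleGraph.fromRel_adj] at h
    rcases h.2 with ⟨e, he, hu, hv⟩ | ⟨e, he, hv, hu⟩
    · subst hu; subst hv
      simpa [hF] using (star e.1 e.2 he).symm
    · subst hu; subst hv
      simpa [hF] using (star e.1 e.2 he)
  obtain ⟨p⟩ := hconn.preconnected (Sum.inr a) (Sum.inr b)
  have : F (Sum.inr a) ↔ F (Sum.inr b) := walk_const F hFadj p
  rw [hF] at this
  simp only [Sum.elim_inr] at this
  exact hb (this.1 ha)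
end

section
/- Let Σ ⊆ [d] × [n] be a support set (every left vertex has degree n−d+1, and |J_I(Σ)| ≥ n−d+|I| for all nonempty I ⊆ [d]). For real matrices A, A' ∈ ℝ^{d×n} (tropical matrices with support Σ, entries off Σ being +∞), if the tropical Plücker vectors agree, i.e., for every d-subset J ⊆ [n], min over matchings λ ⊆ Σ onto J of ∑_{(i,j)∈λ} A_{ij} equals the corresponding minimum for A', then A' is obtained from A by adding a constant c_i to each row i, for some c ∈ ℝ^d with ∑_i c_i = 0. -/
open Finset

/-- The tropical maximal minor `π(A)_J`: the minimum over matchings `λ ⊆ S` onto `J`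
of the sum of the corresponding entries of `A`. -/
noncomputable def tropMinor {d n : ℕ} (S : Finset (Fin d × Fin n)) (A : Fin d → Fin n → ℝ)
    (J : Finset (Fin n)) : ℝ :=
  sInf {r : ℝ | ∃ σ : Fin d → Fin n, Function.Injective σ ∧ (∀ i, (i, σ i) ∈ S) ∧
    Finset.image σ Finset.univ = J ∧ r = ∑ i, A i (σ i)}

namespace Stmt9Aux

variable {d n : ℕ}

/-- The support of row `i`. -/
def row (S : Finset (Fin d × Fin n)) (i : Fin d) : Finset (Fin n) :=
  (S.filter (fun e => e.1 = i)).image Prod.snd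

lemma mem_row {S : Finset (Fin d × Fin n)} {i : Fin d} {j : Fin n} :
    j ∈ row S i ↔ (i, j) ∈ S := by
  constructor
  · rintro h
    simp only [row, mem_image, mem_filter] at h
    obtain ⟨e, ⟨heS, he1⟩, he2⟩ := h
    rwa [show (i, j) = e from Prod.ext he1.symm he2.symm]
  · intro h
    simp only [row, mem_image, mem_filter]
    exact ⟨(i, j), ⟨h, rfl⟩, rfl⟩

/-- The set of matching values. -/
def mset (S : Finset (Fin d × Fin n)) (A : Fin d → Fin n → ℝ) (J : Finset (Fin n)) : Set ℝ :=
  {r : ℝ | ∃ σ : Fin d → Fin n, Function.Injective σ ∧ (∀ i, (i, σ i) ∈ S) ∧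
    Finset.image σ Finset.univ = J ∧ r = ∑ i, A i (σ i)}

lemma tropMinor_eq (S : Finset (Fin d × Fin n)) (A : Fin d → Fin n → ℝ) (J : Finset (Fin n)) :
    tropMinor S A J = sInf (mset S A J) := rfl

lemma mset_finite (S : Finset (Fin d × Fin n)) (A : Fin d → Fin n → ℝ) (J : Finset (Fin n)) :
    (mset S A J).Finite := by
  apply Set.Finite.subset (Set.finite_range (fun σ : Fin d → Fin n => ∑ i, A i (σ i)))
  rintro r ⟨σ, -, -, -, rfl⟩
  exact ⟨σ, rfl⟩

lemma tropMinor_mem {S : Finset (Fin d × Fin n)} {A : Fin d → Fin n → ℝ} {J : Finset (Fin n)}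
    (h : (mset S A J).Nonempty) : tropMinor S A J ∈ mset S A J :=
  h.csInf_mem (mset_finite S A J)

lemma tropMinor_le {S : Finset (Fin d × Fin n)} {A : Fin d → Fin n → ℝ} {J : Finset (Fin n)}
    {r : ℝ} (h : r ∈ mset S A J) : tropMinor S A J ≤ r :=
  csInf_le (mset_finite S A J).bddBelow h

variable {S : Finset (Fin d × Fin n)}

section main

variable (hd : 0 < d) (hdn : d ≤ n)
  (hdeg : ∀ i : Fin d, (S.filter (fun e => e.1 = i)).card = n - d + 1)
  (hhall : ∀ I : Finset (Fin d), I.Nonempty → n - d + I.card ≤ (nbr S I).card)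

include hdeg in
lemma card_row (i : Fin d) : (row S i).card = n - d + 1 := by
  rw [row, Finset.card_image_of_injOn, hdeg i]
  intro e he e' he' hee
  simp only [mem_coe, mem_filter] at he he'
  exact Prod.ext (he.2.trans he'.2.symm) hee

include hd hdn hdeg in
lemma card_compl_row (i : Fin d) : (row S i)ᶜ.card = d - 1 := by
  rw [Finset.card_compl, card_row hdeg i]
  simp only [Fintype.card_fin]
  omega

include hhall in
lemma exists_matching {J : Finset (Fin n)} (hJ : J.card = d) :
    ∃ σ : Fin d → Fin n, Function.Injective σ ∧ (∀ i, (i, σ i) ∈ S) ∧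
      Finset.image σ Finset.univ = J := by
  have key : ∀ s : Finset (Fin d), s.card ≤ (s.biUnion (fun i => row S i ∩ J)).card := by
    intro s
    rcases s.eq_empty_or_nonempty with rfl | hs
    · simp
    have h1 : s.biUnion (fun i => row S i ∩ J) = nbr S s ∩ J := by
      ext j
      simp only [mem_biUnion, mem_inter, nbr, mem_image, mem_filter, mem_row, row]
      constructor
      · rintro ⟨i, his, ⟨e, ⟨heS, he1⟩, he2⟩, hjJ⟩
        exact ⟨⟨e, ⟨heS, he1 ▸ his⟩, he2⟩, hjJ⟩
      · rintro ⟨⟨e, ⟨heS, he1⟩, he2⟩, hjJ⟩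
        exact ⟨e.1, he1, ⟨e, ⟨heS, rfl⟩, he2⟩, hjJ⟩
    rw [h1]
    have h2 := Finset.card_union_add_card_inter (nbr S s) J
    have h3 : (nbr S s ∪ J).card ≤ n := by
      have := Finset.card_le_card (Finset.subset_univ (nbr S s ∪ J))
      simpa using this
    have h4 := hhall s hs
    omega
  obtain ⟨σ, hinj, hmem⟩ := (Finset.all_card_le_biUnion_card_iff_exists_injective _).1 key
  refine ⟨σ, hinj, fun i => mem_row.1 (Finset.mem_inter.1 (hmem i)).1, ?_⟩
  apply Finset.eq_of_subset_of_card_le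
  · intro j hj
    obtain ⟨i, -, rfl⟩ := Finset.mem_image.1 hj
    exact (Finset.mem_inter.1 (hmem i)).2
  · rw [Finset.card_image_of_injective _ hinj, hJ]
    simp

include hd hdn hdeg in
lemma card_special {i : Fin d} {j : Fin n} (hj : j ∈ row S i) :
    ((row S i)ᶜ ∪ {j}).card = d := by
  have hjc : j ∉ (row S i)ᶜ := by simpa using hj
  rw [Finset.union_comm, ← Finset.insert_eq, Finset.card_insert_of_notMem hjc,
    card_compl_row hd hdn hdeg i]
  omega

/-- In a matching onto `(row S i)ᶜ ∪ {j}`, row `i` must use column `j`. -/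
lemma forced {i : Fin d} {j : Fin n} {σ : Fin d → Fin n}
    (hmem : ∀ k, (k, σ k) ∈ S) (him : Finset.image σ Finset.univ = (row S i)ᶜ ∪ {j}) :
    σ i = j := by
  have h1 : σ i ∈ (row S i)ᶜ ∪ {j} := him ▸ Finset.mem_image_of_mem σ (mem_univ i)
  have h2 : σ i ∈ row S i := mem_row.2 (hmem i)
  rcases Finset.mem_union.1 h1 with h | h
  · exact absurd h2 (Finset.mem_compl.1 h)
  · exact Finset.mem_singleton.1 h

include hd hdn hdeg hhall in
lemma exchange_le (A : Fin d → Fin n → ℝ) {i : Fin d} {j j' : Fin n}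
    (hj : j ∈ row S i) (hj' : j' ∈ row S i) :
    tropMinor S A ((row S i)ᶜ ∪ {j'}) ≤ tropMinor S A ((row S i)ᶜ ∪ {j}) + (A i j' - A i j) := by
  obtain ⟨σ0, h1, h2, h3⟩ := exists_matching hhall (card_special hd hdn hdeg hj)
  obtain ⟨σ, hinj, hmem, him, hval⟩ :=
    tropMinor_mem (J := (row S i)ᶜ ∪ {j}) (A := A) ⟨_, σ0, h1, h2, h3, rfl⟩
  have hσi : σ i = j := forced hmem him
  have hj'c : j' ∉ (row S i)ᶜ := by simpa using hj'
  set σ' := Function.update σ i j' with hσ'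
  have hne : ∀ k, k ≠ i → σ k ∈ (row S i)ᶜ := by
    intro k hk
    have h1 : σ k ∈ (row S i)ᶜ ∪ {j} := him ▸ Finset.mem_image_of_mem σ (mem_univ k)
    rcases Finset.mem_union.1 h1 with h | h
    · exact h
    · exact absurd (hinj ((Finset.mem_singleton.1 h).trans hσi.symm)) hk
  have hinj' : Function.Injective σ' := by
    intro a b hab
    by_cases ha : a = i <;> by_cases hb : b = i
    · rw [ha, hb]
    · subst ha
      rw [hσ', Function.update_self, Function.update_of_ne hb] at hab
      exact absurd (hab ▸ hne b hb) hj'c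
    · subst hb
      rw [hσ', Function.update_self, Function.update_of_ne ha] at hab
      exact absurd (hab ▸ hne a ha) hj'c
    · rw [hσ', Function.update_of_ne ha, Function.update_of_ne hb] at hab
      exact hinj hab
  have hmem' : ∀ k, (k, σ' k) ∈ S := by
    intro k
    rcases eq_or_ne k i with rfl | hk
    · rw [hσ', Function.update_self]; exact mem_row.1 hj'
    · rw [hσ', Function.update_of_ne hk]; exact hmem k
  have him' : Finset.image σ' Finset.univ = (row S i)ᶜ ∪ {j'} := by
    apply Finset.eq_of_subset_of_card_le
    · intro x hx
      obtain ⟨k, -, rfl⟩ := Finset.mem_image.1 hx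
      rcases eq_or_ne k i with rfl | hk
      · rw [hσ', Function.update_self]; exact Finset.mem_union_right _ (Finset.mem_singleton_self _)
      · rw [hσ', Function.update_of_ne hk]; exact Finset.mem_union_left _ (hne k hk)
    · rw [Finset.card_image_of_injective _ hinj', card_special hd hdn hdeg hj']
      simp
  have hsum : ∑ k, A k (σ' k) = (∑ k, A k (σ k)) + (A i j' - A i j) := by
    have e1 : (fun k => A k (σ' k)) = Function.update (fun k => A k (σ k)) i (A i j') := by
      funext k
      rcases eq_or_ne k i with rfl | hk
      · rw [hσ', Function.update_self, Function.update_self]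
      · rw [hσ', Function.update_of_ne hk, Function.update_of_ne hk]
    rw [e1, Finset.sum_update_of_mem (mem_univ i), Finset.sdiff_singleton_eq_erase]
    have e2 : ∑ k, A k (σ k) = A i (σ i) + ∑ k ∈ Finset.univ.erase i, A k (σ k) :=
      (Finset.add_sum_erase _ _ (mem_univ i)).symm
    rw [e2, hσi]
    ring
  calc tropMinor S A ((row S i)ᶜ ∪ {j'}) ≤ ∑ k, A k (σ' k) :=
        tropMinor_le ⟨σ', hinj', hmem', him', rfl⟩
    _ = tropMinor S A ((row S i)ᶜ ∪ {j}) + (A i j' - A i j) := by rw [hsum, ← hval]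

include hd hdn hdeg hhall in
lemma exchange_eq (A : Fin d → Fin n → ℝ) {i : Fin d} {j j' : Fin n}
    (hj : j ∈ row S i) (hj' : j' ∈ row S i) :
    tropMinor S A ((row S i)ᶜ ∪ {j'}) = tropMinor S A ((row S i)ᶜ ∪ {j}) + (A i j' - A i j) := by
  have h1 := exchange_le hd hdn hdeg hhall A hj hj'
  have h2 := exchange_le hd hdn hdeg hhall A hj' hj
  linarith

end main

end Stmt9Aux

open Stmt9Aux in
theorem stmt_9 (d n : ℕ) (hd : 0 < d) (hdn : d ≤ n) (S : Finset (Fin d × Fin n))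
    (hdeg : ∀ i : Fin d, (S.filter (fun e => e.1 = i)).card = n - d + 1)
    (hhall : ∀ I : Finset (Fin d), I.Nonempty → n - d + I.card ≤ (nbr S I).card)
    (A A' : Fin d → Fin n → ℝ)
    (hminors : ∀ J : Finset (Fin n), J.card = d → tropMinor S A J = tropMinor S A' J) :
    ∃ c : Fin d → ℝ, (∑ i, c i) = 0 ∧ ∀ e ∈ S, A' e.1 e.2 = A e.1 e.2 + c e.1 := by
  -- choose a base column in each row
  have hrow_ne : ∀ i : Fin d, (row S i).Nonempty := by
    intro i
    rw [← Finset.card_pos, card_row hdeg i]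
    omega
  choose j0 hj0 using hrow_ne
  set c : Fin d → ℝ := fun i => A' i (j0 i) - A i (j0 i) with hc
  have hkey : ∀ e ∈ S, A' e.1 e.2 = A e.1 e.2 + c e.1 := by
    rintro ⟨i, j⟩ he
    have hj : j ∈ row S i := mem_row.2 he
    have e1 := exchange_eq hd hdn hdeg hhall A (hj0 i) hj
    have e2 := exchange_eq hd hdn hdeg hhall A' (hj0 i) hj
    have m1 := hminors _ (card_special hd hdn hdeg hj)
    have m2 := hminors _ (card_special hd hdn hdeg (hj0 i))
    simp only [hc]
    linarith
  refine ⟨c, ?_, hkey⟩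
  -- pick any d-subset J
  obtain ⟨J, -, hJ⟩ : ∃ t ⊆ (Finset.univ : Finset (Fin n)), t.card = d :=
    Finset.exists_subset_card_eq (by simpa using hdn)
  obtain ⟨σ1, h11, h12, h13⟩ := exists_matching hhall hJ
  have hne : (mset S A J).Nonempty := ⟨_, σ1, h11, h12, h13, rfl⟩
  have hne' : (mset S A' J).Nonempty := ⟨_, σ1, h11, h12, h13, rfl⟩
  obtain ⟨σ, hinj, hmem, him, hval⟩ := tropMinor_mem hne
  obtain ⟨τ, hinj', hmem', him', hval'⟩ := tropMinor_mem hne'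
  have hm := hminors J hJ
  have hσ : ∑ i, A' i (σ i) = (∑ i, A i (σ i)) + ∑ i, c i := by
    rw [← Finset.sum_add_distrib]
    exact Finset.sum_congr rfl fun i _ => hkey (i, σ i) (hmem i)
  have hτ : ∑ i, A' i (τ i) = (∑ i, A i (τ i)) + ∑ i, c i := by
    rw [← Finset.sum_add_distrib]
    exact Finset.sum_congr rfl fun i _ => hkey (i, τ i) (hmem' i)
  have l1 : tropMinor S A' J ≤ ∑ i, A' i (σ i) := tropMinor_le ⟨σ, hinj, hmem, him, rfl⟩
  have l2 : tropMinor S A J ≤ ∑ i, A i (τ i) := tropMinor_le ⟨τ, hinj', hmem', him', rfl⟩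
  linarith
end

section
/- Let A ∈ ℝ^{d×n} be a real matrix and p its tropical Plücker vector: p_J = min over permutations σ: [d] → J (bijections onto the d-subset J) of ∑_i A_{i,σ(i)}. Then p satisfies the tropical Plücker relations: for all S ⊆ [n] with |S| = d−1 and T ⊆ [n] with |T| = d+1 and S ⊆ [n], the minimum over i ∈ T \ S of (p_{S∪{i}} + p_{T∖{i}}) is attained at least twice. -/
open Finset

/-- The tropical Plücker coordinate `p_J` of the matrix `A`: the minimum over all
bijections `σ : [d] → J` of `∑ i, A i (σ i)`. -/
noncomputable def tropPlucker {d n : ℕ} (A : Fin d → Fin n → ℝ) (J : Finset (Fin n)) : ℝ :=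
  sInf {r : ℝ | ∃ σ : Fin d → Fin n, Function.Injective σ ∧
    Finset.image σ Finset.univ = J ∧ r = ∑ i, A i (σ i)}

lemma pluckerSet_finite {d n : ℕ} (A : Fin d → Fin n → ℝ) (J : Finset (Fin n)) :
    {r : ℝ | ∃ σ : Fin d → Fin n, Function.Injective σ ∧
      Finset.image σ Finset.univ = J ∧ r = ∑ i, A i (σ i)}.Finite := by
  apply Set.Finite.subset (Set.finite_range (fun σ : Fin d → Fin n => ∑ i, A i (σ i)))
  rintro r ⟨σ, -, -, rfl⟩
  exact ⟨σ, rfl⟩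

lemma pluckerSet_nonempty {d n : ℕ} (A : Fin d → Fin n → ℝ) (J : Finset (Fin n))
    (hJ : J.card = d) :
    {r : ℝ | ∃ σ : Fin d → Fin n, Function.Injective σ ∧
      Finset.image σ Finset.univ = J ∧ r = ∑ i, A i (σ i)}.Nonempty := by
  have e : Fin d ≃ J := (Finset.equivFinOfCardEq hJ).symm
  refine ⟨∑ i, A i (e i : Fin n), fun i => (e i : Fin n), ?_, ?_, rfl⟩
  · exact fun a b hab => e.injective (Subtype.coe_injective hab)
  · ext c
    simp only [Finset.mem_image, Finset.mem_univ, true_and]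
    constructor
    · rintro ⟨i, rfl⟩; exact (e i).2
    · intro hc; exact ⟨e.symm ⟨c, hc⟩, by simp⟩

lemma tropPlucker_le {d n : ℕ} (A : Fin d → Fin n → ℝ) {J : Finset (Fin n)}
    {σ : Fin d → Fin n} (hσ : Function.Injective σ) (him : Finset.image σ Finset.univ = J) :
    tropPlucker A J ≤ ∑ i, A i (σ i) :=
  csInf_le (pluckerSet_finite A J).bddBelow ⟨σ, hσ, him, rfl⟩

lemma tropPlucker_attained {d n : ℕ} (A : Fin d → Fin n → ℝ) {J : Finset (Fin n)}
    (hJ : J.card = d) :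
    ∃ σ : Fin d → Fin n, Function.Injective σ ∧ Finset.image σ Finset.univ = J ∧
      tropPlucker A J = ∑ i, A i (σ i) :=
  (pluckerSet_nonempty A J hJ).csInf_mem (pluckerSet_finite A J)


lemma exchange {d n : ℕ} (A : Fin d → Fin n → ℝ) (σ τ : Fin d → Fin n)
    (hσ : Function.Injective σ) (hτ : Function.Injective τ) (c0 : Fin n)
    (hc0X : c0 ∈ Finset.image σ Finset.univ) (hc0Y : c0 ∉ Finset.image τ Finset.univ) :
    ∃ c1 ∈ Finset.image τ Finset.univ, c1 ∉ Finset.image σ Finset.univ ∧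
      ∃ σ' τ' : Fin d → Fin n, Function.Injective σ' ∧ Function.Injective τ' ∧
        Finset.image σ' Finset.univ = insert c1 ((Finset.image σ Finset.univ).erase c0) ∧
        Finset.image τ' Finset.univ = insert c0 ((Finset.image τ Finset.univ).erase c1) ∧
        (∑ i, A i (σ' i)) + (∑ i, A i (τ' i)) = (∑ i, A i (σ i)) + (∑ i, A i (τ i)) := by
  classical
  haveI hne : Nonempty (Fin d) := by
    obtain ⟨r, -, -⟩ := Finset.mem_image.mp hc0X; exact ⟨r⟩
  have hdpos : 0 < d := by simpa using Fintype.card_pos (α := Fin d)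
  set X : Finset (Fin n) := Finset.image σ Finset.univ with hX
  set Y : Finset (Fin n) := Finset.image τ Finset.univ with hY
  set h : Fin n → Fin n := fun c => τ (Function.invFun σ c) with hh
  have hinv : ∀ c ∈ X, σ (Function.invFun σ c) = c := by
    intro c hc
    obtain ⟨r, -, hr⟩ := Finset.mem_image.mp hc
    exact Function.invFun_eq ⟨r, hr⟩
  have hmemY : ∀ c, h c ∈ Y := fun c => Finset.mem_image.mpr ⟨_, Finset.mem_univ _, rfl⟩
  have hinjX : ∀ a ∈ X, ∀ b ∈ X, h a = h b → a = b := by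
    intro a ha b hb hab
    have h2 := hτ hab
    rw [← hinv a ha, ← hinv b hb, h2]
  set u : ℕ → Fin n := fun j => h^[j] c0 with hu
  have hu0 : u 0 = c0 := rfl
  have husucc : ∀ j, u (j + 1) = h (u j) := fun j => Function.iterate_succ_apply' h j c0
  have huY : ∀ j, 1 ≤ j → u j ∈ Y := by
    intro j hj
    obtain ⟨j, rfl⟩ := Nat.exists_eq_add_of_le hj
    rw [Nat.add_comm, husucc]; exact hmemY _
  -- existence of an iterate escaping X
  have hex : ∃ j, u j ∉ X := by
    by_contra hcon
    push_neg at hcon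
    have key : ∀ i j, u i = u j → u 0 = u (j - i) := by
      intro i
      induction i with
      | zero => intro j hj; simpa using hj
      | succ i ih =>
        intro j hj
        cases j with
        | zero => simp
        | succ j =>
          have h3 : u i = u j := by
            apply hinjX _ (hcon i) _ (hcon j)
            rw [← husucc, ← husucc, hj]
          simpa using ih j h3
    obtain ⟨a, b, hab, heq⟩ := Finite.exists_ne_map_eq_of_infinite u
    have hY1 : u 0 ∈ Y := by
      rcases hab.lt_or_gt with hlt | hlt
      · rw [key a b heq]; exact huY _ (by omega)
      · rw [key b a heq.symm]; exact huY _ (by omega)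
    rw [hu0] at hY1
    exact hc0Y hY1
  set m : ℕ := Nat.find hex with hm
  have hmX : u m ∉ X := Nat.find_spec hex
  have hltX : ∀ j, j < m → u j ∈ X := fun j hj => not_not.mp (Nat.find_min hex hj)
  have hm1 : 1 ≤ m := by
    rcases Nat.eq_zero_or_pos m with h0 | h0
    · exact absurd (by rwa [h0] at hmX) (not_not.mpr (by rw [hu0]; exact hc0X))
    · exact h0
  -- injectivity of u on [0, m]
  have huinj : ∀ i j, i ≤ j → j ≤ m → u i = u j → i = j := by
    intro i
    induction i with
    | zero =>
      intro j _ hjm hj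
      by_contra hne0
      have : u j ∈ Y := huY j (by omega)
      rw [← hj, hu0] at this
      exact hc0Y this
    | succ i ih =>
      intro j hij hjm hj
      cases j with
      | zero => omega
      | succ j =>
        have h3 : u i = u j := by
          apply hinjX _ (hltX i (by omega)) _ (hltX j (by omega))
          rw [← husucc, ← husucc, hj]
        have := ih j (by omega) (by omega) h3
        omega
  have huinj' : ∀ i j, i ≤ m → j ≤ m → u i = u j → i = j := by
    intro i j hi hj hij
    rcases le_total i j with hle | hle
    · exact huinj i j hle hj hij
    · exact (huinj j i hle hi hij.symm).symm
  set C : Finset (Fin n) := (Finset.range m).image u with hC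
  have hmemC : ∀ j, j < m → u j ∈ C := fun j hj =>
    Finset.mem_image.mpr ⟨j, Finset.mem_range.mpr hj, rfl⟩
  set σ' : Fin d → Fin n := fun r => if σ r ∈ C then τ r else σ r with hσ'
  set τ' : Fin d → Fin n := fun r => if σ r ∈ C then σ r else τ r with hτ'
  -- for rows hitting the path, the step relation
  have hstep : ∀ r j, j < m → σ r = u j → τ r = u (j + 1) := by
    intro r j hj hr
    have h1 : Function.invFun σ (u j) = r := hσ (by rw [hinv _ (hltX j hj), hr])
    rw [husucc, hh]
    simp only
    rw [h1]
  have hrow : ∀ j, j < m → ∃ r, σ r = u j :=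
    fun j hj => ⟨Function.invFun σ (u j), hinv _ (hltX j hj)⟩
  -- image of σ'
  have himσ' : Finset.image σ' Finset.univ = insert (u m) (X.erase c0) := by
    ext c
    simp only [Finset.mem_image, Finset.mem_univ, true_and, Finset.mem_insert,
      Finset.mem_erase]
    constructor
    · rintro ⟨r, rfl⟩
      by_cases hc : σ r ∈ C
      · obtain ⟨j, hjm, hj⟩ := Finset.mem_image.mp hc
        rw [Finset.mem_range] at hjm
        have hτr : τ r = u (j + 1) := hstep r j hjm hj.symm
        have : σ' r = u (j + 1) := by rw [hσ']; simp only [if_pos hc]; exact hτr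
        rcases Nat.lt_or_ge (j + 1) m with hlt | hge
        · right
          refine ⟨?_, by rw [this]; exact hltX _ hlt⟩
          rw [this, ← hu0]
          intro hcc
          have := huinj' _ _ (by omega) (by omega) hcc
          omega
        · have hjm1 : j + 1 = m := by omega
          left; rw [this, hjm1]
      · right
        have hs'r : σ' r = σ r := by rw [hσ']; simp only [if_neg hc]
        refine ⟨?_, by rw [hs'r]; exact Finset.mem_image.mpr ⟨r, Finset.mem_univ _, rfl⟩⟩
        rw [hs'r]
        intro hcc
        apply hc
        rw [hcc, ← hu0]
        exact hmemC _ (by omega)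
    · rintro (rfl | ⟨hne0, hcX⟩)
      · obtain ⟨r, hr⟩ := hrow (m - 1) (by omega)
        refine ⟨r, ?_⟩
        have hc : σ r ∈ C := by rw [hr]; exact hmemC _ (by omega)
        have := hstep r (m - 1) (by omega) hr
        rw [hσ']; simp only [if_pos hc]
        rw [this]
        congr 1
        omega
      · by_cases hc : c ∈ C
        · obtain ⟨j, hjm, hj⟩ := Finset.mem_image.mp hc
          rw [Finset.mem_range] at hjm
          have hj0 : j ≠ 0 := by
            intro h0
            rw [h0, hu0] at hj
            exact hne0 hj.symm
          obtain ⟨r, hr⟩ := hrow (j - 1) (by omega)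
          refine ⟨r, ?_⟩
          have hcr : σ r ∈ C := by rw [hr]; exact hmemC _ (by omega)
          have := hstep r (j - 1) (by omega) hr
          rw [hσ']; simp only [if_pos hcr]
          rw [this, ← hj]
          congr 1
          omega
        · refine ⟨Function.invFun σ c, ?_⟩
          have hr : σ (Function.invFun σ c) = c := hinv c hcX
          rw [hσ']; simp only [hr, if_neg hc]
  -- image of τ'
  have himτ' : Finset.image τ' Finset.univ = insert c0 (Y.erase (u m)) := by
    ext c
    simp only [Finset.mem_image, Finset.mem_univ, true_and, Finset.mem_insert,
      Finset.mem_erase]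
    constructor
    · rintro ⟨r, rfl⟩
      by_cases hc : σ r ∈ C
      · obtain ⟨j, hjm, hj⟩ := Finset.mem_image.mp hc
        rw [Finset.mem_range] at hjm
        have hτ'r : τ' r = u j := by rw [hτ']; simp only [if_pos hc]; exact hj.symm
        rcases Nat.eq_zero_or_pos j with h0 | h0
        · left; rw [hτ'r, h0, hu0]
        · right
          refine ⟨?_, by rw [hτ'r]; exact huY j h0⟩
          rw [hτ'r]
          intro hcc
          have := huinj' _ _ (by omega) (by omega) hcc
          omega
      · have hτ'r : τ' r = τ r := by rw [hτ']; simp only [if_neg hc]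
        right
        refine ⟨?_, by rw [hτ'r]; exact Finset.mem_image.mpr ⟨r, Finset.mem_univ _, rfl⟩⟩
        rw [hτ'r]
        intro hcc
        -- τ r = u m would force σ r = u (m-1) ∈ C
        obtain ⟨r', hr'⟩ := hrow (m - 1) (by omega)
        have := hstep r' (m - 1) (by omega) hr'
        have hmm : u (m - 1 + 1) = u m := by congr 1; omega
        rw [hmm] at this
        have : r = r' := hτ (by rw [hcc, this])
        apply hc
        rw [this, hr']
        exact hmemC _ (by omega)
    · rintro (hceq | ⟨hnem, hcY⟩)
      · subst hceq
        refine ⟨Function.invFun σ c, ?_⟩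
        have hr : σ (Function.invFun σ c) = c := hinv c hc0X
        have hcr : σ (Function.invFun σ c) ∈ C := by rw [hr, ← hu0]; exact hmemC _ (by omega)
        rw [hτ']; simp only [if_pos hcr]; exact hr
      · obtain ⟨r, -, hr⟩ := Finset.mem_image.mp hcY
        by_cases hc : σ r ∈ C
        · obtain ⟨j, hjm, hj⟩ := Finset.mem_image.mp hc
          rw [Finset.mem_range] at hjm
          have hτr : τ r = u (j + 1) := hstep r j hjm hj.symm
          have hj1m : j + 1 < m := by
            rcases Nat.lt_or_ge (j + 1) m with hlt | hge
            · exact hlt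
            · exfalso; apply hnem; rw [← hr, hτr]; congr 1; omega
          obtain ⟨r', hr'⟩ := hrow (j + 1) hj1m
          refine ⟨r', ?_⟩
          have hcr' : σ r' ∈ C := by rw [hr']; exact hmemC _ hj1m
          rw [hτ']; simp only [if_pos hcr']
          rw [hr', ← hτr, hr]
        · refine ⟨r, ?_⟩
          rw [hτ']; simp only [if_neg hc]; exact hr
  -- cardinalities
  have hXcard : X.card = d := by
    rw [hX, Finset.card_image_of_injective _ hσ, Finset.card_univ, Fintype.card_fin]
  have hYcard : Y.card = d := by
    rw [hY, Finset.card_image_of_injective _ hτ, Finset.card_univ, Fintype.card_fin]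
  have humY : u m ∈ Y := huY m hm1
  have hcardσ' : (insert (u m) (X.erase c0)).card = d := by
    rw [Finset.card_insert_of_notMem (fun hmem => hmX (Finset.mem_of_mem_erase hmem)),
      Finset.card_erase_of_mem hc0X, hXcard]
    omega
  have hcardτ' : (insert c0 (Y.erase (u m))).card = d := by
    rw [Finset.card_insert_of_notMem (fun hmem => hc0Y (Finset.mem_of_mem_erase hmem)),
      Finset.card_erase_of_mem humY, hYcard]
    omega
  -- injectivity from cardinality
  have hinjσ' : Function.Injective σ' := by
    have hcard : (Finset.univ.image σ').card = (Finset.univ : Finset (Fin d)).card := by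
      rw [himσ', hcardσ', Finset.card_univ, Fintype.card_fin]
    have h2 := Finset.card_image_iff.mp hcard
    rw [Finset.coe_univ] at h2
    exact Set.injOn_univ.mp h2
  have hinjτ' : Function.Injective τ' := by
    have hcard : (Finset.univ.image τ').card = (Finset.univ : Finset (Fin d)).card := by
      rw [himτ', hcardτ', Finset.card_univ, Fintype.card_fin]
    have h2 := Finset.card_image_iff.mp hcard
    rw [Finset.coe_univ] at h2
    exact Set.injOn_univ.mp h2
  -- sum preservation
  have hsum : (∑ i, A i (σ' i)) + (∑ i, A i (τ' i)) = (∑ i, A i (σ i)) + (∑ i, A i (τ i)) := by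
    rw [← Finset.sum_add_distrib, ← Finset.sum_add_distrib]
    apply Finset.sum_congr rfl
    intro i _
    by_cases hi : σ i ∈ C
    · rw [hσ', hτ']; simp only [if_pos hi]; ring
    · rw [hσ', hτ']; simp only [if_neg hi]
  exact ⟨u m, humY, hmX, σ', τ', hinjσ', hinjτ', himσ', himτ', hsum⟩

theorem stmt_10 (d n : ℕ) (hd : 0 < d) (hdn : d ≤ n) (A : Fin d → Fin n → ℝ) :
    ∀ S T : Finset (Fin n), S.card = d - 1 → T.card = d + 1 →
      ∃ i ∈ T \ S, ∃ i' ∈ T \ S, i ≠ i' ∧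
        tropPlucker A (insert i S) + tropPlucker A (T.erase i) =
          tropPlucker A (insert i' S) + tropPlucker A (T.erase i') ∧
        ∀ k ∈ T \ S,
          tropPlucker A (insert i S) + tropPlucker A (T.erase i) ≤
            tropPlucker A (insert k S) + tropPlucker A (T.erase k) := by
  intro S T hS hT
  classical
  have hTS : (T \ S).Nonempty := by
    rw [← Finset.card_pos]
    have h1 := Finset.le_card_sdiff S T
    omega
  obtain ⟨k0, hk0, hmin⟩ := Finset.exists_min_image (T \ S)
    (fun k => tropPlucker A (insert k S) + tropPlucker A (T.erase k)) hTS
  have hk0T : k0 ∈ T := (Finset.mem_sdiff.mp hk0).1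
  have hk0S : k0 ∉ S := (Finset.mem_sdiff.mp hk0).2
  have hXc : (insert k0 S).card = d := by
    rw [Finset.card_insert_of_notMem hk0S, hS]; omega
  have hYc : (T.erase k0).card = d := by
    rw [Finset.card_erase_of_mem hk0T, hT]; omega
  obtain ⟨σ, hσinj, hσim, hσval⟩ := tropPlucker_attained A hXc
  obtain ⟨τ, hτinj, hτim, hτval⟩ := tropPlucker_attained A hYc
  have hc0X : k0 ∈ Finset.image σ Finset.univ := by
    rw [hσim]; exact Finset.mem_insert_self _ _
  have hc0Y : k0 ∉ Finset.image τ Finset.univ := by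
    rw [hτim]; exact Finset.notMem_erase _ _
  obtain ⟨c1, hc1Y, hc1X, σ', τ', hs'inj, ht'inj, hs'im, ht'im, hsum⟩ :=
    exchange A σ τ hσinj hτinj k0 hc0X hc0Y
  rw [hσim] at hs'im hc1X
  rw [hτim] at ht'im hc1Y
  have hc1T : c1 ∈ T := Finset.mem_of_mem_erase hc1Y
  have hc1k0 : c1 ≠ k0 := Finset.ne_of_mem_erase hc1Y
  have hc1S : c1 ∉ S := fun hc => hc1X (Finset.mem_insert_of_mem hc)
  have hc1TS : c1 ∈ T \ S := Finset.mem_sdiff.mpr ⟨hc1T, hc1S⟩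
  have him1 : Finset.image σ' Finset.univ = insert c1 S := by
    rw [hs'im, Finset.erase_insert hk0S]
  have him2 : Finset.image τ' Finset.univ = T.erase c1 := by
    rw [ht'im, Finset.erase_right_comm, Finset.insert_erase
      (Finset.mem_erase.mpr ⟨Ne.symm hc1k0, hk0T⟩)]
  have hle : tropPlucker A (insert c1 S) + tropPlucker A (T.erase c1) ≤
      tropPlucker A (insert k0 S) + tropPlucker A (T.erase k0) := by
    calc tropPlucker A (insert c1 S) + tropPlucker A (T.erase c1)
        ≤ (∑ i, A i (σ' i)) + (∑ i, A i (τ' i)) :=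
          add_le_add (tropPlucker_le A hs'inj him1) (tropPlucker_le A ht'inj him2)
      _ = tropPlucker A (insert k0 S) + tropPlucker A (T.erase k0) := by
          rw [hsum, ← hσval, ← hτval]
  exact ⟨k0, hk0, c1, hc1TS, Ne.symm hc1k0,
    le_antisymm (hmin c1 hc1TS) hle, hmin⟩
end

section
/- Let d ≤ n, let Σ ⊆ [d] × [n] contain a matching onto some d-subset, and let A be a real matrix supported on Σ. Suppose λ = {(i₁,j₁),...,(i_s,j_s)} and λ' = {(i₂,j₁),(i₃,j₂),...,(i₁,j_s)} are two partial matchings supported on Σ on the same rows I = {i₁,...,i_s} and columns J = {j₁,...,j_s} (so λ ∪ λ' is a cycle), satisfying ∑_{(i,j)∈λ} A_{ij} = ∑_{(i,j)∈λ'} A_{ij} ≤ ∑_{(i,j)∈λ''} A_{ij} for every partial matching λ'' ⊆ Σ from I to J. Then there exist x ∈ ℝ^d and y ∈ ℝⁿ such that min_{(i,j)∈Σ}(x_i − y_j + A_{ij}) is attained at every edge of λ ∪ λ' (in particular, attained on a set of edges containing a cycle). -/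
open Finset
open Fin.NatCast Fin.CommRing

theorem stmt_16 (d n s : ℕ) (hs : 2 ≤ s) (hdn : d ≤ n)
    (S : Finset (Fin d × Fin n)) (A : Fin d → Fin n → ℝ)
    (hmatch : ∃ σ : Fin d → Fin n, Function.Injective σ ∧ ∀ i, (i, σ i) ∈ S)
    (ι : Fin s → Fin d) (κ : Fin s → Fin n)
    (hι : Function.Injective ι) (hκ : Function.Injective κ)
    -- λ = {(i₁,j₁),…,(i_s,j_s)} is supported on Σ
    (hlam : ∀ k, (ι k, κ k) ∈ S)
    -- λ' = {(i₂,j₁),(i₃,j₂),…,(i₁,j_s)} is supported on Σ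
    (hlam' : ∀ k, (ι (finRotate s k), κ k) ∈ S)
    -- equal weights
    (heq : ∑ k, A (ι k) (κ k) = ∑ k, A (ι (finRotate s k)) (κ k))
    -- minimality among all partial matchings from I to J supported on Σ
    (hmin : ∀ π : Equiv.Perm (Fin s), (∀ k, (ι k, κ (π k)) ∈ S) →
      ∑ k, A (ι k) (κ k) ≤ ∑ k, A (ι k) (κ (π k))) :
    ∃ (x : Fin d → ℝ) (y : Fin n → ℝ) (m : ℝ),
      (∀ p ∈ S, m ≤ x p.1 - y p.2 + A p.1 p.2) ∧
      ∀ k : Fin s,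
        x (ι k) - y (κ k) + A (ι k) (κ k) = m ∧
        x (ι (finRotate s k)) - y (κ k) + A (ι (finRotate s k)) (κ k) = m := by
  classical
  obtain ⟨s₁, rfl⟩ : ∃ s₁, s = s₁ + 1 := ⟨s - 1, by omega⟩
  have hs₁ : 1 ≤ s₁ := by omega
  simp only [finRotate_succ_apply] at hlam' heq ⊢
  set c : Fin (s₁+1) → Fin (s₁+1) → ℝ := fun k l => A (ι k) (κ l) - A (ι k) (κ k) with hc
  set cs : ℕ → ℝ := fun m => c ((m+1 : ℕ) : Fin (s₁+1)) ((m : ℕ) : Fin (s₁+1)) with hcs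
  set arc : ℕ → ℕ → ℝ := fun a t => ∑ j ∈ Finset.range t, cs (a + j) with harc
  set P : Fin (s₁+1) → ℝ := fun z => arc 0 z.val with hP
  have hcsval : ∀ k : Fin (s₁+1), cs k.val = c (k+1) k := by
    intro k
    have h1 : ((k.val : ℕ) : Fin (s₁+1)) = k := Fin.cast_val_eq_self k
    have h2 : ((k.val + 1 : ℕ) : Fin (s₁+1)) = k + 1 := by rw [Nat.cast_add, Nat.cast_one, h1]
    simp only [hcs]
    rw [h1, h2]
  have hmod : ∀ m : ℕ, ((m + (s₁+1) : ℕ) : Fin (s₁+1)) = ((m : ℕ) : Fin (s₁+1)) := by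
    intro m
    rw [Nat.cast_add, Fin.natCast_self, add_zero]
  have hper : ∀ a t, arc (a + (s₁+1)) t = arc a t := by
    intro a t
    simp only [harc]
    refine Finset.sum_congr rfl fun j _ => ?_
    have h1 : a + (s₁+1) + j = (a + j) + (s₁+1) := by ring
    rw [h1]
    simp only [hcs]
    rw [hmod, show (a + j) + (s₁+1) + 1 = (a + j + 1) + (s₁+1) by omega, hmod]
  have hsplit : ∀ a t₁ t₂, arc a (t₁ + t₂) = arc a t₁ + arc (a + t₁) t₂ := by
    intro a t₁ t₂
    simp only [harc]
    rw [Finset.sum_range_add]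
    congr 1
    exact Finset.sum_congr rfl fun j _ => by rw [Nat.add_assoc]
  have hrotsum : ∑ k : Fin (s₁+1), A (ι (k+1)) (κ (k+1)) = ∑ k, A (ι k) (κ k) :=
    Fintype.sum_equiv (Equiv.addRight 1) _ _ (fun i => rfl)
  have hT : arc 0 (s₁+1) = 0 := by
    have h1 : arc 0 (s₁+1) = ∑ j ∈ Finset.range (s₁+1), cs j := by
      simp only [harc]
      exact Finset.sum_congr rfl fun j _ => by rw [Nat.zero_add]
    have h2 : ∑ j ∈ Finset.range (s₁+1), cs j = ∑ k : Fin (s₁+1), cs k.val :=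
      (Fin.sum_univ_eq_sum_range cs (s₁+1)).symm
    rw [h1, h2, Finset.sum_congr rfl (fun k _ => hcsval k)]
    simp only [hc]
    rw [Finset.sum_sub_distrib, hrotsum, ← heq]
    ring
  have key : ∀ k l : Fin (s₁+1), arc k.val ((l - k).val) = P l - P k := by
    intro k l
    have hsub : (l - k).val = (l.val + ((s₁+1) - k.val)) % (s₁+1) := by
      simp [Fin.sub_def, Nat.add_comm]
    have hkv : k.val < s₁ + 1 := k.isLt
    have hlv : l.val < s₁ + 1 := l.isLt
    rcases le_or_gt k.val l.val with hab | hab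
    · have ht : (l - k).val = l.val - k.val := by
        rw [hsub]
        have h3 : l.val + ((s₁+1) - k.val) = (l.val - k.val) + (s₁+1) := by omega
        rw [h3, Nat.add_mod_right]
        exact Nat.mod_eq_of_lt (by omega)
      have h4 : l.val = k.val + (l.val - k.val) := by omega
      have h5 : P l = P k + arc k.val (l.val - k.val) := by
        simp only [hP]
        conv_lhs => rw [h4]
        rw [hsplit, Nat.zero_add]
      rw [ht, h5]; ring
    · have ht : (l - k).val = l.val + (s₁+1) - k.val := by
        rw [hsub]
        have h3 : l.val + ((s₁+1) - k.val) = l.val + (s₁+1) - k.val := by omega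
        rw [h3]
        exact Nat.mod_eq_of_lt (by omega)
      have h5 : arc 0 (s₁+1) = arc 0 k.val + arc k.val ((s₁+1) - k.val) := by
        have h := hsplit 0 k.val ((s₁+1) - k.val)
        rw [Nat.zero_add] at h
        have e : k.val + ((s₁+1) - k.val) = s₁+1 := by omega
        rw [e] at h
        exact h
      have h6 : arc k.val ((l - k).val) = arc k.val ((s₁+1) - k.val) + arc (s₁+1) l.val := by
        rw [ht]
        have e : l.val + (s₁+1) - k.val = ((s₁+1) - k.val) + l.val := by omega
        rw [e, hsplit]
        have e2 : k.val + ((s₁+1) - k.val) = s₁+1 := by omega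
        rw [e2]
      have h7 : arc (s₁+1) l.val = arc 0 l.val := by
        have h := hper 0 l.val
        rwa [Nat.zero_add] at h
      simp only [hP]
      rw [h6, h7]
      linarith [h5, hT]
  have tight : ∀ k : Fin (s₁+1), c (k+1) k = P (k+1) - P k := by
    intro k
    have h1 := key k (k+1)
    have h2 : k + 1 - k = 1 := by ring
    have h3 : (1 : Fin (s₁+1)).val = 1 := by
      rw [Fin.val_one']
      exact Nat.mod_eq_of_lt (by omega)
    rw [h2, h3] at h1
    have h4 : arc k.val 1 = cs k.val := by
      simp only [harc]
      rw [Finset.sum_range_one, Nat.add_zero]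
    rw [h4, hcsval] at h1
    exact h1
  have feas : ∀ k l : Fin (s₁+1), (ι k, κ l) ∈ S → P k - P l ≤ c k l := by
    intro k l hedge
    by_cases hkl : k = l
    · subst hkl
      simp only [hc]
      simp
    set t := (l - k).val with htdef
    have htlt : t < s₁ + 1 := (l - k).isLt
    have htpos : 1 ≤ t := by
      rcases Nat.eq_zero_or_pos t with h | h
      · exact absurd (sub_eq_zero.mp (Fin.ext (h : (l - k).val = 0))).symm hkl
      · exact h
    have hflt : ∀ z : Fin (s₁+1),
        (if z.val = 0 then t else if z.val ≤ t then z.val - 1 else z.val) < s₁+1 := by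
      intro z
      have := z.isLt
      split_ifs <;> omega
    set f : Fin (s₁+1) → Fin (s₁+1) :=
      fun z => ⟨if z.val = 0 then t else if z.val ≤ t then z.val - 1 else z.val, hflt z⟩ with hf
    have finj : Function.Injective f := by
      intro z₁ z₂ h
      have h' : (f z₁).val = (f z₂).val := by rw [h]
      simp only [hf] at h'
      have h1 := z₁.isLt
      have h2 := z₂.isLt
      apply Fin.ext
      split_ifs at h' <;> omega
    set g : Fin (s₁+1) → Fin (s₁+1) := fun x => k + f (x - k) with hg
    have ginj : Function.Injective g := by
      intro x₁ x₂ h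
      simp only [hg] at h
      exact sub_left_injective (finj (add_left_cancel h))
    set σ : Equiv.Perm (Fin (s₁+1)) :=
      Equiv.ofBijective g (Finite.injective_iff_bijective.mp ginj) with hσ
    have hσapp : ∀ x, σ x = g x := fun x => rfl
    have hf0 : ∀ z : Fin (s₁+1), z.val = 0 → k + f z = l := by
      intro z hz
      have h1 : f z = l - k := by
        apply Fin.ext
        simp only [hf]
        rw [if_pos hz]
      rw [h1]; ring
    have hf1 : ∀ z : Fin (s₁+1), z.val ≠ 0 → z.val ≤ t → f z = z - 1 := by
      intro z h0 h1
      apply Fin.ext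
      have h2 : (z - 1).val = z.val - 1 := by
        rw [Fin.coe_sub_one, if_neg]
        exact fun h => h0 (by rw [h]; rfl)
      simp only [hf]
      rw [if_neg h0, if_pos h1, h2]
    have hf2 : ∀ z : Fin (s₁+1), t < z.val → f z = z := by
      intro z h1
      apply Fin.ext
      simp only [hf]
      rw [if_neg (by omega), if_neg (by omega)]
    have hedges : ∀ x, (ι x, κ (σ x)) ∈ S := by
      intro x
      rw [hσapp]
      simp only [hg]
      by_cases h0 : (x - k).val = 0
      · have hxk : x = k := sub_eq_zero.mp (Fin.ext h0)
        rw [hf0 (x - k) h0, hxk]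
        exact hedge
      · by_cases h1 : (x - k).val ≤ t
        · rw [hf1 (x - k) h0 h1]
          have hx1 : k + (x - k - 1) = x - 1 := by ring
          rw [hx1]
          have h := hlam' (x - 1)
          have hx2 : x - 1 + 1 = x := by ring
          rwa [hx2] at h
        · rw [hf2 (x - k) (by omega)]
          have hx3 : k + (x - k) = x := by ring
          rw [hx3]
          exact hlam x
    set G : ℕ → ℝ := fun m => c (k + (m : Fin (s₁+1))) (k + f (m : Fin (s₁+1))) with hG
    have hsum1 : ∑ x, c x (σ x) = ∑ m ∈ Finset.range (s₁+1), G m := by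
      have e1 : ∑ x, c x (σ x) = ∑ z, c (k + z) (k + f z) := by
        refine (Fintype.sum_equiv (Equiv.addLeft k) _ _ fun z => ?_).symm
        rw [hσapp]
        simp only [hg, Equiv.coe_addLeft]
        rw [add_sub_cancel_left]
      rw [e1]
      have e2 : ∀ z : Fin (s₁+1), c (k + z) (k + f z) = G z.val := by
        intro z
        simp only [hG, Fin.cast_val_eq_self]
      rw [Finset.sum_congr rfl (fun z _ => e2 z)]
      exact Fin.sum_univ_eq_sum_range G (s₁+1)
    have hsum2 : ∑ m ∈ Finset.range (s₁+1), G m = c k l + arc k.val t := by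
      have hsplit2 : ∑ m ∈ Finset.range (s₁+1), G m
          = ∑ m ∈ Finset.range (t+1), G m + ∑ m ∈ Finset.Ico (t+1) (s₁+1), G m := by
        simp only [Finset.range_eq_Ico]
        exact (Finset.sum_Ico_consecutive G (Nat.zero_le _) (by omega)).symm
      have hzero : ∑ m ∈ Finset.Ico (t+1) (s₁+1), G m = 0 := by
        apply Finset.sum_eq_zero
        intro m hm
        rw [Finset.mem_Ico] at hm
        have hv : ((m : ℕ) : Fin (s₁+1)).val = m := Fin.val_cast_of_lt (by omega)
        simp only [hG]
        rw [hf2 ((m : ℕ) : Fin (s₁+1)) (by rw [hv]; omega)]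
        simp only [hc]
        ring
      have hfirst : ∑ m ∈ Finset.range (t+1), G m
          = (∑ j ∈ Finset.range t, G (j+1)) + G 0 := Finset.sum_range_succ' G t
      have hG0 : G 0 = c k l := by
        simp only [hG, Nat.cast_zero]
        rw [hf0 0 rfl, add_zero]
      have hGj : ∀ j, j < t → G (j+1) = cs (k.val + j) := by
        intro j hj
        have hv1 : ((j+1 : ℕ) : Fin (s₁+1)).val = j+1 := Fin.val_cast_of_lt (by omega)
        have hx : k + ((j+1 : ℕ) : Fin (s₁+1)) = ((k.val + j + 1 : ℕ) : Fin (s₁+1)) := by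
          push_cast [Fin.cast_val_eq_self]
          ring
        have hy : k + f ((j+1 : ℕ) : Fin (s₁+1)) = ((k.val + j : ℕ) : Fin (s₁+1)) := by
          rw [hf1 _ (by rw [hv1]; omega) (by rw [hv1]; omega)]
          push_cast [Fin.cast_val_eq_self]
          ring
        simp only [hG, hcs]
        rw [hx, hy]
      have harct : ∑ j ∈ Finset.range t, G (j+1) = arc k.val t := by
        simp only [harc]
        exact Finset.sum_congr rfl fun j hj => hGj j (Finset.mem_range.mp hj)
      rw [hsplit2, hzero, hfirst, hG0, harct]
      ring
    have hm := hmin σ hedges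
    have hsum0 : ∑ x, c x (σ x) = ∑ x, A (ι x) (κ (σ x)) - ∑ x, A (ι x) (κ x) := by
      simp only [hc]
      rw [Finset.sum_sub_distrib]
    have hpos : 0 ≤ c k l + arc k.val t := by
      rw [← hsum2, ← hsum1, hsum0]
      linarith
    have hk := key k l
    rw [← htdef] at hk
    linarith [hk, hpos]
  -- assemble the solution
  set u : Fin (s₁+1) → ℝ := fun z => -A (ι z) (κ z) - P z with hu
  set v : Fin (s₁+1) → ℝ := fun z => -P z with hv
  set SA : ℝ := ∑ p : Fin d × Fin n, |A p.1 p.2| with hSA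
  set SB : ℝ := ∑ z : Fin (s₁+1), (|P z| + |A (ι z) (κ z)|) with hSB
  set M : ℝ := 1 + SA + SB with hM
  have hSA0 : 0 ≤ SA := Finset.sum_nonneg fun p _ => abs_nonneg _
  have hSB0 : 0 ≤ SB := Finset.sum_nonneg fun z _ => by positivity
  have hAbd : ∀ i j, -SA ≤ A i j := by
    intro i j
    have h1 : |A i j| ≤ SA :=
      Finset.single_le_sum (f := fun p : Fin d × Fin n => |A p.1 p.2|)
        (fun p _ => abs_nonneg _) (Finset.mem_univ (i, j))
    have h2 := neg_abs_le (A i j)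
    linarith
  have hPbd : ∀ z, |P z| + |A (ι z) (κ z)| ≤ SB := fun z =>
    Finset.single_le_sum (f := fun z : Fin (s₁+1) => |P z| + |A (ι z) (κ z)|)
      (fun _ _ => by positivity) (Finset.mem_univ z)
  refine ⟨Function.extend ι u (fun _ => M), Function.extend κ v (fun _ => -M), 0, ?_, ?_⟩
  · intro p hp
    by_cases hi : ∃ z, ι z = p.1
    · obtain ⟨z, hz⟩ := hi
      rw [← hz, hι.extend_apply]
      by_cases hj : ∃ w, κ w = p.2
      · obtain ⟨w, hw⟩ := hj
        rw [← hw, hκ.extend_apply]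
        have hfe := feas z w (by rw [hz, hw]; exact hp)
        simp only [hc] at hfe
        simp only [hu, hv]
        linarith
      · rw [Function.extend_apply' _ _ _ hj]
        simp only [hu, hM]
        have h1 := hAbd (ι z) p.2
        have h2 := hPbd z
        have h3 := le_abs_self (P z)
        have h4 := le_abs_self (A (ι z) (κ z))
        linarith
    · rw [Function.extend_apply' _ _ _ hi]
      by_cases hj : ∃ w, κ w = p.2
      · obtain ⟨w, hw⟩ := hj
        rw [← hw, hκ.extend_apply]
        simp only [hv, hM]
        have h1 := hAbd p.1 (κ w)
        have h2 := hPbd w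
        have h3 := neg_abs_le (P w)
        have h4 := abs_nonneg (A (ι w) (κ w))
        linarith
      · rw [Function.extend_apply' _ _ _ hj]
        simp only [hM]
        have h1 := hAbd p.1 p.2
        linarith
  · intro z
    constructor
    · rw [hι.extend_apply, hκ.extend_apply]
      simp only [hu, hv]
      ring
    · rw [hι.extend_apply, hκ.extend_apply]
      have ht := tight z
      simp only [hc] at ht
      simp only [hu, hv]
      linarith
end

section
/- Let G ⊆ [d] × [n] be a bipartite graph whose transversal matroid M(G) has at least one basis, and let P_G = ∑_{i=1}^d Δ_{J_i(G)} ⊆ ℝⁿ be the Minkowski sum of the simplices Δ_{J_i(G)} = conv{e_j : j ∈ J_i(G)}. Then the matroid basis polytope of M(G) equals the intersection of P_G with the hypersimplex Δ_{d,n} = {x ∈ ℝⁿ : ∑ x_j = d, 0 ≤ x_j ≤ 1}. -/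
open Finset

/-- The neighborhood `J_i(G)` of a single left vertex `i`. -/
def nbrOf {d n : ℕ} (G : Finset (Fin d × Fin n)) (i : Fin d) : Finset (Fin n) :=
  (G.filter (fun e => e.1 = i)).image Prod.snd

lemma mem_nbrOf {d n : ℕ} {G : Finset (Fin d × Fin n)} {i : Fin d} {j : Fin n} :
    j ∈ nbrOf G i ↔ (i, j) ∈ G := by
  simp only [nbrOf, Finset.mem_image, Finset.mem_filter]
  constructor
  · rintro ⟨⟨a, b⟩, ⟨hab, rfl⟩, rfl⟩; exact hab
  · intro h; exact ⟨(i, j), ⟨h, rfl⟩, rfl⟩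

lemma indicator_sum {d n : ℕ} (τ : Fin d → Fin n) (hτ : Function.Injective τ) (j : Fin n) :
    ∑ i : Fin d, (if τ i = j then (1:ℝ) else 0) =
      if j ∈ Finset.image τ Finset.univ then 1 else 0 := by
  by_cases h : j ∈ Finset.image τ Finset.univ
  · obtain ⟨i0, -, hi0⟩ := Finset.mem_image.1 h
    rw [if_pos h, Finset.sum_eq_single_of_mem i0 (Finset.mem_univ _)]
    · rw [if_pos hi0]
    · intro i _ hne
      rw [if_neg]
      intro he; exact hne (hτ (he.trans hi0.symm))
  · rw [if_neg h, Finset.sum_eq_zero]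
    intro i _
    rw [if_neg]
    intro he; exact h (Finset.mem_image.2 ⟨i, Finset.mem_univ _, he⟩)

lemma sum_dite_fin {n d : ℕ} (hdn : d ≤ n) (F : Fin d → ℝ) (y : ℝ) :
    ∑ k : Fin n, (if h : (k : ℕ) < d then F ⟨k, h⟩ else y)
      = (∑ i : Fin d, F i) + ((n - d : ℕ) : ℝ) * y := by
  classical
  set g : ℕ → ℝ := fun k => if h : k < d then F ⟨k, h⟩ else y with hg
  have h1 : ∑ k : Fin n, (if h : (k : ℕ) < d then F ⟨k, h⟩ else y) = ∑ k ∈ Finset.range n, g k :=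
    Fin.sum_univ_eq_sum_range g n
  rw [h1, Finset.range_eq_Ico, ← Finset.sum_Ico_consecutive _ (Nat.zero_le d) hdn]
  congr 1
  · rw [← Finset.range_eq_Ico, ← Fin.sum_univ_eq_sum_range g d]
    refine Finset.sum_congr rfl fun i _ => ?_
    simp [g, i.isLt]
  · rw [Finset.sum_congr rfl (fun k hk => ?_), Finset.sum_const, Nat.card_Ico, nsmul_eq_mul]
    have : ¬ k < d := by
      have := (Finset.mem_Ico.1 hk).1; omega
    simp [g, this]

theorem stmt_17 (d n : ℕ) (G : Finset (Fin d × Fin n))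
    (hbasis : ∃ B, IsTransversalBasis G B) :
    convexHull ℝ {x : Fin n → ℝ | ∃ B : Finset (Fin n), IsTransversalBasis G B ∧
        x = fun j => if j ∈ B then (1 : ℝ) else 0} =
      -- the Minkowski sum P_G of the simplices Δ_{J_i(G)} ...
      {x : Fin n → ℝ | ∃ f : Fin d → Fin n → ℝ,
        (∀ i, f i ∈ convexHull ℝ
          {v : Fin n → ℝ | ∃ j ∈ nbrOf G i, v = fun j' => if j' = j then (1 : ℝ) else 0}) ∧
        x = ∑ i, f i} ∩
      -- ... intersected with the hypersimplex Δ_{d,n}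
      {x : Fin n → ℝ | (∑ j, x j) = d ∧ ∀ j, 0 ≤ x j ∧ x j ≤ 1} := by
  classical
  apply Set.Subset.antisymm
  · -- easy direction
    apply convexHull_min
    · rintro x ⟨B, ⟨σ, hσinj, hσG, hσB⟩, rfl⟩
      refine ⟨⟨fun i => fun j' => if σ i = j' then (1:ℝ) else 0, fun i => ?_, ?_⟩, ?_, ?_⟩
      · apply subset_convexHull
        exact ⟨σ i, mem_nbrOf.2 (hσG i), by funext j'; simp [eq_comm]⟩
      · funext j
        rw [Finset.sum_apply]
        rw [indicator_sum σ hσinj j, hσB]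
      · have : ∑ j, (if j ∈ B then (1:ℝ) else 0) = B.card := by
          simp [Finset.sum_boole, Finset.filter_mem_eq_inter]
        rw [this, ← hσB, Finset.card_image_of_injective _ hσinj]
        simp
      · intro j
        by_cases h : j ∈ B <;> simp [h]
    · apply Convex.inter
      · rintro x ⟨f, hf, rfl⟩ y ⟨g, hg, rfl⟩ a b ha hb hab
        refine ⟨fun i => a • f i + b • g i, fun i => (convex_convexHull ℝ _) (hf i) (hg i) ha hb hab, ?_⟩
        rw [Finset.smul_sum, Finset.smul_sum, ← Finset.sum_add_distrib]
      · rintro x ⟨hx1, hx2⟩ y ⟨hy1, hy2⟩ a b ha hb hab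
        constructor
        · simp only [Pi.add_apply, Pi.smul_apply, smul_eq_mul]
          rw [Finset.sum_add_distrib, ← Finset.mul_sum, ← Finset.mul_sum, hx1, hy1]
          rw [← add_mul, hab, one_mul]
        · intro j
          simp only [Pi.add_apply, Pi.smul_apply, smul_eq_mul]
          constructor
          · exact add_nonneg (mul_nonneg ha (hx2 j).1) (mul_nonneg hb (hy2 j).1)
          · calc a * x j + b * y j ≤ a * 1 + b * 1 := by
                  gcongr; exacts [(hx2 j).2, (hy2 j).2]
              _ = 1 := by rw [mul_one, mul_one, hab]
  · -- hard direction
    classical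
    rintro x ⟨⟨f, hf, rfl⟩, hsum, hbound⟩
    obtain ⟨B0, σ0, hσ0, -, -⟩ := hbasis
    have hdn : d ≤ n := by simpa using Fintype.card_le_of_injective σ0 hσ0
    -- properties of the pieces f i
    have hfprop : ∀ i : Fin d, (∀ j, 0 ≤ f i j) ∧ (∑ j, f i j = 1) ∧
        (∀ j, j ∉ nbrOf G i → f i j = 0) := by
      intro i
      have hsub : convexHull ℝ {v : Fin n → ℝ | ∃ j ∈ nbrOf G i,
            v = fun j' => if j' = j then (1:ℝ) else 0} ⊆
          {g : Fin n → ℝ | (∀ j, 0 ≤ g j) ∧ (∑ j, g j = 1) ∧ (∀ j, j ∉ nbrOf G i → g j = 0)} := by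
        apply convexHull_min
        · rintro v ⟨j, hj, rfl⟩
          refine ⟨fun j' => ?_, by simp, fun j' hj' => ?_⟩
          · dsimp only; split <;> norm_num
          · dsimp only; rw [if_neg]; rintro rfl; exact hj' hj
        · rintro g1 ⟨h1a, h1b, h1c⟩ g2 ⟨h2a, h2b, h2c⟩ a b ha hb hab
          refine ⟨fun j => ?_, ?_, fun j hj => ?_⟩
      
          · simp only [Pi.add_apply, Pi.smul_apply, smul_eq_mul]
            exact add_nonneg (mul_nonneg ha (h1a j)) (mul_nonneg hb (h2a j))
          · simp only [Pi.add_apply, Pi.smul_apply, smul_eq_mul]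
            rw [Finset.sum_add_distrib, ← Finset.mul_sum, ← Finset.mul_sum, h1b, h2b,
              mul_one, mul_one, hab]
          · simp only [Pi.add_apply, Pi.smul_apply, smul_eq_mul, h1c j hj, h2c j hj,
              mul_zero, add_zero]
      exact hsub (hf i)
    set X : Fin n → ℝ := fun j => ∑ i, f i j with hX
    have hXsum : ∑ j, X j = d := by simpa [X, Finset.sum_apply] using hsum
    have hXle : ∀ j, X j ≤ 1 := fun j => by simpa [X, Finset.sum_apply] using (hbound j).2
    have hXeq1 : d = n → ∀ j, X j = 1 := by
      intro hdn' j
      have h0 : ∑ j, (1 - X j) = 0 := by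
        rw [Finset.sum_sub_distrib, hXsum, ← hdn']
        simp
      have := (Finset.sum_eq_zero_iff_of_nonneg
        (fun j _ => sub_nonneg.2 (hXle j))).1 h0 j (Finset.mem_univ j)
      linarith
    set c : Fin n → ℝ := fun j => (1 - X j) / ((n : ℝ) - d) with hc
    set M : Matrix (Fin n) (Fin n) ℝ :=
      fun k j => if h : (k : ℕ) < d then f ⟨k, h⟩ j else c j with hMdef
    have hdM : M ∈ doublyStochastic ℝ (Fin n) := by
      rw [mem_doublyStochastic_iff_sum]
      refine ⟨fun k j => ?_, fun k => ?_, fun j => ?_⟩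
      · by_cases h : (k : ℕ) < d
        · simp only [M, dif_pos h]
          exact (hfprop ⟨k, h⟩).1 j
        · simp only [M, dif_neg h]
          apply div_nonneg (sub_nonneg.2 (hXle j))
          have : (d : ℝ) ≤ n := by exact_mod_cast hdn
          linarith
      · by_cases h : (k : ℕ) < d
        · simp only [M, dif_pos h]
          exact (hfprop ⟨k, h⟩).2.1
        · simp only [M, dif_neg h, c]
          have hdlt : d < n := lt_of_le_of_lt (Nat.le_of_not_lt h) k.isLt
          have hne : (n : ℝ) - d ≠ 0 := by
            have : (d : ℝ) < n := by exact_mod_cast hdlt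
            linarith
          rw [← Finset.sum_div, Finset.sum_sub_distrib, hXsum]
          simp only [Finset.sum_const, Finset.card_univ, Fintype.card_fin, nsmul_eq_mul, mul_one]
          rw [div_eq_one_iff_eq hne]
      · have hs : ∑ k : Fin n, M k j = (∑ i : Fin d, f i j) + ((n - d : ℕ) : ℝ) * c j :=
          sum_dite_fin hdn (fun i => f i j) (c j)
        rw [hs]
        have hXj : X j = ∑ i : Fin d, f i j := rfl
        by_cases h : d < n
        · have hne : (n : ℝ) - d ≠ 0 := by
            have : (d : ℝ) < n := by exact_mod_cast h
            linarith
          rw [Nat.cast_sub hdn, hc, ← hXj]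
          field_simp
          ring
        · have hdn' : d = n := le_antisymm hdn (not_lt.1 h)
          have h0 : (n - d : ℕ) = 0 := by omega
          rw [h0, ← hXj, hXeq1 hdn' j]
          simp
    obtain ⟨w, hw0, hw1, hwM⟩ := exists_eq_sum_perm_of_mem_doublyStochastic hdM
    have hMentry : ∀ k j, M k j =
        ∑ σ : Equiv.Perm (Fin n), w σ * (if σ k = j then (1:ℝ) else 0) := by
      intro k j
      conv_lhs => rw [← hwM]
      rw [Matrix.sum_apply]
      refine Finset.sum_congr rfl fun σ _ => ?_
      simp [Equiv.Perm.permMatrix, PEquiv.toMatrix_apply, Equiv.toPEquiv_apply, mul_ite]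
    set τ : Equiv.Perm (Fin n) → Fin d → Fin n := fun σ i => σ (Fin.castLE hdn i) with hτ
    have hτinj : ∀ σ, Function.Injective (τ σ) :=
      fun σ => σ.injective.comp (Fin.castLE_injective hdn)
    set t : Finset (Equiv.Perm (Fin n)) := Finset.univ.filter (fun σ => w σ ≠ 0) with ht
    have hw1' : ∑ σ ∈ t, w σ = 1 := by
      rw [ht, Finset.sum_filter_ne_zero]
      exact hw1
    have hcast : ∀ i : Fin d, ((Fin.castLE hdn i : Fin n) : ℕ) < d := fun i => i.isLt
    have hMf : ∀ (i : Fin d) (j : Fin n), M (Fin.castLE hdn i) j = f i j := by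
      intro i j
      simp only [M]
      rw [dif_pos (hcast i)]
      exact congrFun (congrArg f (Fin.ext rfl)) j
    have hG : ∀ σ ∈ t, ∀ i : Fin d, (i, τ σ i) ∈ G := by
      intro σ hσ i
      have hwσ : 0 < w σ := (hw0 σ).lt_of_ne (Ne.symm (Finset.mem_filter.1 hσ).2)
      have hpos : 0 < M (Fin.castLE hdn i) (τ σ i) := by
        rw [hMentry]
        have hle : w σ * (if σ (Fin.castLE hdn i) = τ σ i then (1:ℝ) else 0) ≤
            ∑ σ' : Equiv.Perm (Fin n), w σ' * (if σ' (Fin.castLE hdn i) = τ σ i then (1:ℝ) else 0) := by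
          apply Finset.single_le_sum (f := fun σ' => w σ' * (if σ' (Fin.castLE hdn i) = τ σ i then (1:ℝ) else 0))
            (fun σ' _ => mul_nonneg (hw0 σ') (by split <;> norm_num)) (Finset.mem_univ σ)
        have heq : (if σ (Fin.castLE hdn i) = τ σ i then (1:ℝ) else 0) = 1 := if_pos rfl
        rw [heq, mul_one] at hle
        exact lt_of_lt_of_le hwσ hle
      rw [hMf] at hpos
      by_contra hnot
      have hmem : τ σ i ∉ nbrOf G i := fun hmem => hnot (mem_nbrOf.1 hmem)
      rw [(hfprop i).2.2 _ hmem] at hpos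
      exact lt_irrefl 0 hpos
    have hxz : (∑ i, f i) = t.centerMass w
        (fun σ => fun j => if j ∈ Finset.image (τ σ) Finset.univ then (1:ℝ) else 0) := by
      rw [Finset.centerMass_eq_of_sum_1 _ _ hw1']
      funext j
      have hL : (∑ i, f i) j = ∑ i : Fin d, f i j := by simp [Finset.sum_apply]
      have hR : (∑ σ ∈ t, w σ • (fun j' => if j' ∈ Finset.image (τ σ) Finset.univ then (1:ℝ) else 0)) j
          = ∑ σ ∈ t, w σ * (if j ∈ Finset.image (τ σ) Finset.univ then (1:ℝ) else 0) := by
        simp [Finset.sum_apply]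
      rw [hL, hR]
      calc ∑ i : Fin d, f i j
          = ∑ i : Fin d, ∑ σ : Equiv.Perm (Fin n),
              w σ * (if σ (Fin.castLE hdn i) = j then (1:ℝ) else 0) := by
            refine Finset.sum_congr rfl fun i _ => ?_
            rw [← hMf i j, hMentry]
        _ = ∑ σ : Equiv.Perm (Fin n), ∑ i : Fin d,
              w σ * (if τ σ i = j then (1:ℝ) else 0) := Finset.sum_comm
        _ = ∑ σ : Equiv.Perm (Fin n),
              w σ * (if j ∈ Finset.image (τ σ) Finset.univ then (1:ℝ) else 0) := by
            refine Finset.sum_congr rfl fun σ _ => ?_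
            rw [← Finset.mul_sum, indicator_sum (τ σ) (hτinj σ) j]
        _ = ∑ σ ∈ t, w σ * (if j ∈ Finset.image (τ σ) Finset.univ then (1:ℝ) else 0) := by
            rw [ht]
            refine (Finset.sum_filter_of_ne fun σ _ hne => ?_).symm
            intro hw'
            exact hne (by rw [hw', zero_mul])
    rw [hxz]
    apply Finset.centerMass_mem_convexHull
    · exact fun σ _ => hw0 σ
    · rw [hw1']; norm_num
    · intro σ hσ
      exact ⟨Finset.image (τ σ) Finset.univ, ⟨τ σ, hτinj σ, hG σ hσ, rfl⟩, rfl⟩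
end
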